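/- arXiv:2307.01353 — 8 statements merged into one kernel-verified Lean document; each statement's English description precedes it below -/
import Mathlib

section
/- Let μ be a set partition of [m] into blocks, and let a = (a₁,…,a_ℓ) be a weak composition of m. Let κ_a be the coloring map that replaces elements 1,…,a₁ by color 1, a₁+1,…,a₁+a₂ by color 2, etc. Suppose every block of κ_a(μ) is a set (i.e., no block of μ contains two elements of the same color). Then the number of set partitions γ of [m] with κ_a(γ) = κ_a(μ) equals (a₁!⋯a_ℓ!)/m(κ_a(μ))!, where m(·)! is the product over distinct blocks B of the factorial of the multiplicity of B. -/
/-!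
The color-preserving permutations of `[m]` form the Young subgroup `S_a`, of order `a₁! ⋯ a_ℓ!`,
and act on set partitions without changing their colored type. When the blocks of `μ` are sets,
a permutation `σ` with `σ μ = γ` is the same thing as a bijection from the blocks of `μ` to those
of `γ` preserving colors: each element `i` must go to the unique element of the image block that
has the color of `i`. Such bijections exist exactly when `κ(γ) = κ(μ)`, and there are `m(κ(μ))!`
of them, so `S_a` is the disjoint union of `|{γ : κ(γ) = κ(μ)}|` fibers of size `m(κ(μ))!`.
-/

open Finset

/-- The multiset partition obtained by coloring the elements of a set partition `P`
of `[m]` via the coloring map `κ`. -/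
def coloredF {m ℓ : ℕ} (κ : Fin m → Fin ℓ) (P : Finpartition (univ : Finset (Fin m))) :
    Multiset (Multiset (Fin ℓ)) :=
  P.parts.val.map fun B => B.val.map κ

/-- `m(ρ̃)!` : the product over the distinct blocks of a multiset partition of the
factorial of the multiplicity of that block. -/
def mfact {β : Type*} [DecidableEq β] (s : Multiset β) : ℕ :=
  ∏ b ∈ s.toFinset, (s.count b).factorial

open Equiv Function

lemma Nat.card_eq_card_mul_of_card_fiber {X Y : Type*} [Finite X] [Fintype Y] (g : X → Y)
    {n : ℕ} (h : ∀ y, Nat.card {x // g x = y} = n) : Nat.card X = Nat.card Y * n := by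
  rw [← Nat.card_congr (sigmaFiberEquiv g), Nat.card_sigma, sum_congr rfl fun y _ => h y,
    sum_const, Finset.card_univ, Nat.card_eq_fintype_card, smul_eq_mul]

lemma card_equiv_fiberwise {α β ι : Type*} [Fintype α] [Fintype β] [DecidableEq α] [DecidableEq ι]
    (f : α → ι) (f' : β → ι) (h : ∀ c, Nat.card {x // f x = c} = Nat.card {y // f' y = c}) :
    Nat.card {e : α ≃ β // ∀ x, f' (e x) = f x} =
      ∏ c ∈ univ.image f, (Nat.card {x // f x = c}).factorial := by
  obtain ⟨e₀, he₀⟩ : ∃ e₀ : α ≃ β, f' ∘ e₀ = f :=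
    ⟨ofFiberEquiv fun c => (Finite.card_eq.1 (h c)).some, funext (ofFiberEquiv_map _)⟩
  have hf' : f ∘ e₀.symm = f' := by rw [← he₀, comp_assoc, e₀.self_comp_symm, comp_id]
  rw [Nat.card_congr (((Equiv.refl α).equivCongr e₀.symm).subtypeEquiv
      (q := fun g : Perm α => f ∘ g = f) fun e => by simp [← hf', funext_iff]),
    Nat.card_eq_fintype_card, DomMulAct.stabilizer_card']
  simp only [Nat.card_eq_fintype_card]

section Partitions

variable {α γ : Type*} (κ : α → γ)

def blockColors (B : Finset α) : Multiset γ := B.val.map κ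

lemma nodup_blockColors_iff {B : Finset α} : (blockColors κ B).Nodup ↔ Set.InjOn κ B :=
  Multiset.nodup_map_iff_inj_on B.nodup

lemma card_blockColors (B : Finset α) : Multiset.card (blockColors κ B) = B.card :=
  Multiset.card_map _ _

lemma blockColors_map {σ : Perm α} (hσ : κ ∘ σ = κ) (B : Finset α) :
    blockColors κ (B.map σ.toEmbedding) = blockColors κ B := by
  rw [blockColors, map_val, Multiset.map_map, coe_toEmbedding, hσ, blockColors]

lemma apply_eq_of_map_eq_map [DecidableEq α] {B : Finset α} (hB : Set.InjOn κ B) {σ τ : Perm α}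
    (hσ : κ ∘ σ = κ) (hτ : κ ∘ τ = κ) (h : B.map σ.toEmbedding = B.map τ.toEmbedding) {i : α}
    (hi : i ∈ B) : σ i = τ i := by
  obtain ⟨j, hj, hji⟩ := mem_map.1 (h ▸ mem_map_of_mem τ.toEmbedding hi)
  simp only [coe_toEmbedding] at hji
  have hκ : κ j = κ i := by rw [← congrFun hσ j, comp_apply, hji]; exact congrFun hτ i
  rw [← hji, hB hj hi hκ]

variable [Fintype α] [DecidableEq α]

def permMap (σ : Perm α) (P : Finpartition (univ : Finset α)) : Finpartition (univ : Finset α) :=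
  (P.map { toEquiv := σ.finsetCongr, map_rel_iff' := by simp }).copy (by simp)

lemma parts_permMap (σ : Perm α) (P : Finpartition (univ : Finset α)) :
    (permMap σ P).parts = P.parts.map σ.finsetCongr.toEmbedding := rfl

def partColor (P : Finpartition (univ : Finset α)) (i : α) : P.parts × γ :=
  (⟨P.part i, P.part_mem.2 (mem_univ i)⟩, κ i)

variable {κ} {P Q : Finpartition (univ : Finset α)}

lemma partColor_injective (hP : ∀ B ∈ P.parts, Set.InjOn κ B) : Injective (partColor κ P) := by
  intro i j h
  simp only [partColor, Prod.mk.injEq, Subtype.mk.injEq] at h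
  exact hP _ (P.part_mem.2 (mem_univ i)) (P.mem_part_self.2 (mem_univ i))
    (h.1 ▸ P.mem_part_self.2 (mem_univ j)) h.2

lemma mk_mem_range_partColor_iff {B : P.parts} {c : γ} :
    (B, c) ∈ Set.range (partColor κ P) ↔ c ∈ blockColors κ B := by
  constructor
  · rintro ⟨i, hi⟩
    simp only [partColor, Prod.mk.injEq] at hi
    exact Multiset.mem_map.2 ⟨i, hi.1 ▸ P.mem_part_self.2 (mem_univ i), hi.2⟩
  · intro hc
    obtain ⟨i, hi, rfl⟩ := Multiset.mem_map.1 hc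
    exact ⟨i, Prod.ext (Subtype.ext (P.part_eq_of_mem B.2 hi)) rfl⟩

lemma injOn_of_blockEquiv (hP : ∀ B ∈ P.parts, Set.InjOn κ B) (e : P.parts ≃ Q.parts)
    (he : ∀ B, blockColors κ (e B) = blockColors κ B) : ∀ C ∈ Q.parts, Set.InjOn κ C := by
  intro C hC
  have := he (e.symm ⟨C, hC⟩)
  rw [apply_symm_apply] at this
  rw [← nodup_blockColors_iff, this, nodup_blockColors_iff]
  exact hP _ (e.symm ⟨C, hC⟩).2

/-- Sends `i` to the element of `e` (block of `i`) having the color of `i`. -/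
noncomputable def permOfBlockEquiv (hP : ∀ B ∈ P.parts, Set.InjOn κ B) (e : P.parts ≃ Q.parts)
    (he : ∀ B, blockColors κ (e B) = blockColors κ B) : Perm α :=
  (ofInjective _ (partColor_injective hP)).trans <|
    ((e.prodCongr (Equiv.refl γ)).subtypeEquiv fun ⟨B, c⟩ => by
      rw [prodCongr_apply, Prod.map, refl_apply, mk_mem_range_partColor_iff,
        mk_mem_range_partColor_iff, he]).trans
    (ofInjective _ (partColor_injective (injOn_of_blockEquiv hP e he))).symm

lemma partColor_permOfBlockEquiv (hP : ∀ B ∈ P.parts, Set.InjOn κ B) (e : P.parts ≃ Q.parts)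
    (he : ∀ B, blockColors κ (e B) = blockColors κ B) (i : α) :
    partColor κ Q (permOfBlockEquiv hP e he i) = (e (partColor κ P i).1, κ i) :=
  apply_ofInjective_symm (partColor_injective (injOn_of_blockEquiv hP e he)) _

lemma map_permOfBlockEquiv (hP : ∀ B ∈ P.parts, Set.InjOn κ B) (e : P.parts ≃ Q.parts)
    (he : ∀ B, blockColors κ (e B) = blockColors κ B) (B : P.parts) :
    B.1.map (permOfBlockEquiv hP e he).toEmbedding = e B := by
  refine eq_of_subset_of_card_le ?_ ?_
  · intro j hj
    obtain ⟨i, hi, rfl⟩ := mem_map.1 hj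
    have := congrArg (fun x => x.1.1) (partColor_permOfBlockEquiv hP e he i)
    simp only [partColor, P.part_eq_of_mem B.2 hi] at this
    rw [coe_toEmbedding, ← Subtype.coe_eta B B.2, ← this]
    exact Q.mem_part_self.2 (mem_univ _)
  · rw [card_map, ← card_blockColors κ, he, card_blockColors]

lemma permMap_permOfBlockEquiv (hP : ∀ B ∈ P.parts, Set.InjOn κ B) (e : P.parts ≃ Q.parts)
    (he : ∀ B, blockColors κ (e B) = blockColors κ B) :
    permMap (permOfBlockEquiv hP e he) P = Q := by
  refine Finpartition.ext (Finset.ext fun C => ?_)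
  rw [parts_permMap, mem_map]
  constructor
  · rintro ⟨B, hB, rfl⟩
    rw [coe_toEmbedding, finsetCongr_apply, map_permOfBlockEquiv hP e he ⟨B, hB⟩]
    exact (e _).2
  · intro hC
    refine ⟨_, (e.symm ⟨C, hC⟩).2, ?_⟩
    rw [coe_toEmbedding, finsetCongr_apply, map_permOfBlockEquiv, apply_symm_apply]

def blockEquivOfPerm (σ : Perm α) (h : permMap σ P = Q) : P.parts ≃ Q.parts :=
  σ.finsetCongr.subtypeEquiv fun B => by rw [← h, parts_permMap, mem_map_equiv, symm_apply_apply]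

variable (κ P Q) in
noncomputable def colorPreservingPermMapEquiv (hP : ∀ B ∈ P.parts, Set.InjOn κ B) :
    {σ : {σ : Perm α // κ ∘ σ = κ} // permMap σ.1 P = Q} ≃
      {e : P.parts ≃ Q.parts // ∀ B, blockColors κ (e B) = blockColors κ B} :=
  ofBijective (fun σ => ⟨blockEquivOfPerm σ.1.1 σ.2, fun B => blockColors_map κ σ.1.2 B⟩) <| by
    constructor
    · rintro ⟨⟨σ, hσ⟩, hσP⟩ ⟨⟨τ, hτ⟩, hτP⟩ h
      refine Subtype.ext (Subtype.ext (Equiv.ext fun i => ?_))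
      have hB := P.part_mem.2 (mem_univ i)
      exact apply_eq_of_map_eq_map κ (hP _ hB) hσ hτ (congrArg (fun f => (f.1 ⟨_, hB⟩).1) h)
        (P.mem_part_self.2 (mem_univ i))
    · rintro ⟨e, he⟩
      have hκ : κ ∘ permOfBlockEquiv hP e he = κ :=
        funext fun i => congrArg Prod.snd (partColor_permOfBlockEquiv hP e he i)
      exact ⟨⟨⟨_, hκ⟩, permMap_permOfBlockEquiv hP e he⟩,
        Subtype.ext (Equiv.ext fun B => Subtype.ext (map_permOfBlockEquiv hP e he B))⟩

end Partitions

section Coloring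

variable {m ℓ : ℕ} {κ : Fin m → Fin ℓ}

lemma coloredF_permMap {σ : Perm (Fin m)} (hσ : κ ∘ σ = κ)
    (P : Finpartition (univ : Finset (Fin m))) :
    coloredF κ (permMap σ P) = coloredF κ P := by
  rw [coloredF, parts_permMap, map_val, Multiset.map_map]
  exact Multiset.map_congr rfl fun B _ => blockColors_map κ hσ B

variable (κ) in
lemma card_blocks_eq_count (P : Finpartition (univ : Finset (Fin m))) (t : Multiset (Fin ℓ)) :
    Nat.card {B : P.parts // blockColors κ B = t} = (coloredF κ P).count t := by
  rw [Nat.card_eq_fintype_card, Fintype.card_subtype, univ_eq_attach,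
    filter_attach (blockColors κ · = t), card_map, card_attach, coloredF, Multiset.count_map]
  simp only [eq_comm]
  rfl

lemma card_colorPreservingBlockEquiv {P Q : Finpartition (univ : Finset (Fin m))}
    (hPQ : coloredF κ Q = coloredF κ P) :
    Nat.card {e : P.parts ≃ Q.parts // ∀ B, blockColors κ (e B) = blockColors κ B} =
      mfact (coloredF κ P) := by
  have himage : univ.image (fun B : P.parts => blockColors κ B) = (coloredF κ P).toFinset := by
    ext t
    simp [coloredF, blockColors]
  rw [card_equiv_fiberwise (fun B : P.parts => blockColors κ B) (fun C : Q.parts => blockColors κ C)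
      fun t => by rw [card_blocks_eq_count, card_blocks_eq_count, hPQ], himage, mfact]
  exact prod_congr rfl fun t _ => by rw [card_blocks_eq_count]

end Coloring

theorem stmt0_general {m ℓ : ℕ} (κ : Fin m → Fin ℓ)
    (P : Finpartition (univ : Finset (Fin m)))
    (hblocks : ∀ B ∈ P.parts, Set.InjOn κ ↑B) :
    Nat.card {Q : Finpartition (univ : Finset (Fin m)) // coloredF κ Q = coloredF κ P} *
      mfact (coloredF κ P)
      = ∏ c : Fin ℓ, ((univ.filter fun i => κ i = c).card).factorial := by
  let orbitMap : {σ : Perm (Fin m) // κ ∘ σ = κ} → {Q // coloredF κ Q = coloredF κ P} :=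
    fun σ => ⟨permMap σ.1 P, coloredF_permMap σ.2 P⟩
  have hfiber : ∀ Q, Nat.card {σ // orbitMap σ = Q} = mfact (coloredF κ P) := fun Q => by
    rw [← card_colorPreservingBlockEquiv Q.2,
      ← Nat.card_congr (colorPreservingPermMapEquiv κ P Q hblocks)]
    exact Nat.card_congr (subtypeEquivRight fun σ => Subtype.ext_iff)
  rw [← Nat.card_eq_card_mul_of_card_fiber orbitMap hfiber, Nat.card_eq_fintype_card,
    DomMulAct.stabilizer_card]
  simp [Fintype.card_subtype]

/-- If `κ` is the coloring map of a weak composition `a` of `m`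
(a monotone map `Fin m → Fin ℓ`, whose fibers have the sizes `a₁, …, a_ℓ`), and every
block of the colored partition `κ(μ)` is a set (no block of `μ` has two elements of the
same color), then the number of set partitions `γ` of `[m]` with `κ(γ) = κ(μ)` is
`(a₁! ⋯ a_ℓ!) / m(κ(μ))!`. -/
theorem stmt0 {m ℓ : ℕ} (κ : Fin m → Fin ℓ) (hκ : Monotone κ)
    (P : Finpartition (univ : Finset (Fin m)))
    (hblocks : ∀ B ∈ P.parts, Set.InjOn κ ↑B) :
    Nat.card {Q : Finpartition (univ : Finset (Fin m)) // coloredF κ Q = coloredF κ P} *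
      mfact (coloredF κ P)
      = ∏ c : Fin ℓ, ((univ.filter fun i => κ i = c).card).factorial :=
  stmt0_general κ P hblocks
end

section
/- Let S_a^μ = {σ ∈ S_a : σ·μ = μ} be the stabilizer of a set partition μ of [m] under the action of the Young subgroup S_a (acting by relabeling elements). If no block of μ contains two elements assigned the same color by κ_a, then |S_a^μ| = m(κ_a(μ))!, the product of factorials of multiplicities of the distinct blocks of the colored partition κ_a(μ). -/
open Finset

/- A relabelling `σ` in the stabilizer permutes the blocks of `μ`, and this permutation preserves
the colored block `κ B` of every block `B`. Conversely, because κ is injective on blocks, a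
color-preserving permutation of the blocks lifts to exactly one color-preserving `σ`: it sends each
`x` to the unique element of the image block having the color of `x`. So the stabilizer is in
bijection with the permutations of the blocks that fix the coloring `B ↦ κ B`, and the number of
those is the product of the factorials of the fibre sizes, i.e. of the multiplicities in `κ(μ)`. -/

open Equiv

theorem card_perm_comp_eq_mfact {α β : Type*} [Fintype α] [DecidableEq α] [DecidableEq β]
    (f : α → β) : Nat.card {g : Perm α // f ∘ g = f} = mfact (univ.val.map f) := by
  rw [Nat.card_eq_fintype_card, DomMulAct.stabilizer_card', mfact]
  refine prod_congr (by ext; simp) fun b _ => ?_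
  rw [Multiset.count_map, Fintype.card_subtype, card_def, filter_val]
  simp only [eq_comm]

namespace Finpartition

variable {α β : Type*} [Fintype α] [DecidableEq α] (P : Finpartition (univ : Finset α))

def colorPart (κ : α → β) (B : P.parts) : Multiset β := B.1.val.map κ

noncomputable def permParts (σ : Perm α) (hσ : P.parts.image (fun B => B.image σ) = P.parts) :
    Perm P.parts :=
  Equiv.ofBijective (fun B => ⟨B.1.image σ, hσ.subset (mem_image_of_mem _ B.2)⟩) <|
    Finite.injective_iff_bijective.mp fun _ _ h =>
      Subtype.ext (image_injective σ.injective (congrArg Subtype.val h))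

variable {P}

lemma colorPart_comp_permParts {κ : α → β} {σ : Perm α} (hσκ : κ ∘ σ = κ)
    (hσ : P.parts.image (fun B => B.image σ) = P.parts) :
    P.colorPart κ ∘ P.permParts σ hσ = P.colorPart κ := by
  funext B
  change (B.1.image σ).val.map κ = B.1.val.map κ
  rw [image_val_of_injOn σ.injective.injOn, Multiset.map_map, hσκ]

lemma image_parts_eq_of_image_eq {σ : Perm α} {g : Perm P.parts}
    (h : ∀ B : P.parts, B.1.image σ = g B) : P.parts.image (fun B => B.image σ) = P.parts := by
  ext C
  constructor
  · intro hC
    obtain ⟨B, hB, rfl⟩ := mem_image.mp hC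
    exact h ⟨B, hB⟩ ▸ (g _).2
  · intro hC
    obtain ⟨A, hA⟩ := g.surjective ⟨C, hC⟩
    exact mem_image.mpr ⟨A.1, A.2, by rw [h, hA]⟩

variable {κ : α → β}

lemma perm_eq_of_image_eq (hκ : ∀ B ∈ P.parts, Set.InjOn κ B) {σ τ : Perm α}
    (hσκ : κ ∘ σ = κ) (hτκ : κ ∘ τ = κ) (hσ : P.parts.image (fun B => B.image σ) = P.parts)
    (h : ∀ B ∈ P.parts, B.image σ = B.image τ) : σ = τ := by
  ext x
  have hxB := P.part_mem.2 (mem_univ x)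
  have hx := P.mem_part (mem_univ x)
  have hσB : (P.part x).image σ ∈ P.parts := hσ ▸ mem_image_of_mem _ hxB
  refine hκ _ hσB (mem_image_of_mem σ hx) ?_ ?_
  · exact h _ hxB ▸ mem_image_of_mem τ hx
  · exact (congrFun hσκ x).trans (congrFun hτκ x).symm

lemma exists_perm_image_eq (hκ : ∀ B ∈ P.parts, Set.InjOn κ B) {g : Perm P.parts}
    (hg : P.colorPart κ ∘ g = P.colorPart κ) :
    ∃ σ : Perm α, κ ∘ σ = κ ∧ ∀ B : P.parts, B.1.image σ = g B := by
  let partOf (x : α) : P.parts := ⟨P.part x, P.part_mem.2 (mem_univ x)⟩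
  have hex (x : α) : ∃ y ∈ (g (partOf x)).1, κ y = κ x := by
    have hx : κ x ∈ P.colorPart κ (partOf x) := Multiset.mem_map_of_mem κ (P.mem_part (mem_univ x))
    rw [← congrFun hg (partOf x)] at hx
    exact Multiset.mem_map.mp hx
  choose τ hτg hτκ using hex
  have hτ : Function.Injective τ := by
    intro x y hxy
    have hxy' : partOf x = partOf y := g.injective <| Subtype.ext <|
      P.eq_of_mem_parts (g _).2 (g _).2 (hτg x) (hxy ▸ hτg y)
    have hpart : P.part x = P.part y := congrArg Subtype.val hxy'
    have hy : y ∈ P.part x := hpart ▸ P.mem_part (mem_univ y)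
    exact hκ _ (P.part_mem.2 (mem_univ x)) (P.mem_part (mem_univ x)) hy
      (by rw [← hτκ x, ← hτκ y, hxy])
  refine ⟨Equiv.ofBijective τ (Finite.injective_iff_bijective.mp hτ), funext hτκ, fun B => ?_⟩
  refine eq_of_subset_of_card_le ?_ ?_
  · rintro _ hy
    obtain ⟨x, hx, rfl⟩ := mem_image.mp hy
    have hB : partOf x = B := Subtype.ext (P.part_eq_of_mem B.2 hx)
    exact hB ▸ hτg x
  · have hcard := congrArg Multiset.card (congrFun hg B)
    simp only [Function.comp_apply, colorPart, Multiset.card_map] at hcard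
    rw [card_image_of_injective _ (ofBijective τ _).injective, card_def, card_def, hcard]

theorem card_stabilizer_eq_card_perm_comp_colorPart (hκ : ∀ B ∈ P.parts, Set.InjOn κ B) :
    Nat.card {σ : Perm α // κ ∘ σ = κ ∧ P.parts.image (fun B => B.image σ) = P.parts} =
      Nat.card {g : Perm P.parts // P.colorPart κ ∘ g = P.colorPart κ} := by
  refine Nat.card_eq_of_bijective
    (fun σ => ⟨P.permParts σ.1 σ.2.2, colorPart_comp_permParts σ.2.1 σ.2.2⟩) ⟨?_, ?_⟩
  · rintro ⟨σ, hσκ, hσ⟩ ⟨τ, hτκ, _⟩ h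
    refine Subtype.ext (perm_eq_of_image_eq hκ hσκ hτκ hσ fun B hB => ?_)
    exact congrArg (fun g : {g : Perm P.parts // _} => (g.1 ⟨B, hB⟩ : Finset α)) h
  · rintro ⟨g, hg⟩
    obtain ⟨σ, hσκ, hσg⟩ := exists_perm_image_eq hκ hg
    exact ⟨⟨σ, hσκ, image_parts_eq_of_image_eq hσg⟩,
      Subtype.ext (Equiv.ext fun B => Subtype.ext (hσg B))⟩

end Finpartition

theorem coloredF_eq_map_colorPart {m ℓ : ℕ} (κ : Fin m → Fin ℓ)
    (P : Finpartition (univ : Finset (Fin m))) : coloredF κ P = univ.val.map (P.colorPart κ) := by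
  rw [univ_eq_attach, attach_val, coloredF]
  exact (Multiset.attach_map_val' P.parts.val fun B => B.val.map κ).symm

theorem stmt1_general {m ℓ : ℕ} (κ : Fin m → Fin ℓ)
    (P : Finpartition (univ : Finset (Fin m)))
    (hblocks : ∀ B ∈ P.parts, Set.InjOn κ ↑B) :
    Nat.card {σ : Equiv.Perm (Fin m) //
        κ ∘ ⇑σ = κ ∧ P.parts.image (fun B => B.image ⇑σ) = P.parts}
      = mfact (coloredF κ P) := by
  rw [P.card_stabilizer_eq_card_perm_comp_colorPart hblocks, card_perm_comp_eq_mfact,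
    coloredF_eq_map_colorPart]

/-- Let `S_a^μ = {σ ∈ S_a : σ·μ = μ}` be the stabilizer of a set
partition `μ` of `[m]` under the Young subgroup `S_a` (here `S_a` is the stabilizer of
the monotone coloring map `κ = κ_a`, acting on set partitions by relabeling elements).
If no block of `μ` contains two elements of the same color, then
`|S_a^μ| = m(κ_a(μ))!`. -/
theorem stmt1 {m ℓ : ℕ} (κ : Fin m → Fin ℓ) (hκ : Monotone κ)
    (P : Finpartition (univ : Finset (Fin m)))
    (hblocks : ∀ B ∈ P.parts, Set.InjOn κ ↑B) :
    Nat.card {σ : Equiv.Perm (Fin m) //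
        κ ∘ ⇑σ = κ ∧ P.parts.image (fun B => B.image ⇑σ) = P.parts}
      = mfact (coloredF κ P) :=
  stmt1_general κ P hblocks
end

section
/- For weak compositions a, b of r of length k, the coloring map κ_{a,b} (which colors unbarred elements according to a and barred elements according to b) induces a bijection between the set of orbits of set partitions of [r] ∪ {1̄,…,r̄} under the action of S_a × S_b and the set of multiset partitions with unbarred-element multiplicities given by a and barred-element multiplicities given by b. -/
/-!
Colouring forgets only which letter of a given colour sits where, so two set partitions with
the same coloured image are matched block by block by colour-preserving bijections (equal
colour multisets mean equal fibre sizes). Gluing these gives a colour-preserving permutation of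
`[r] ∪ [r̄]`; as barred and unbarred colours live in different summands, it is a pair
`(σ, τ) ∈ S_a × S_b`. Conversely, a multiset partition with the right content is lifted to the
letters one block at a time, and since the letters are distinct the lift is a set partition.
-/

open Finset

variable {r k : ℕ}

/-- The coloring map `κ_{a,b}` on the two-row alphabet `[r] ∪ [r̄]`:
unbarred elements (`Sum.inl`) are colored by `f` and barred elements (`Sum.inr`) by `g`. -/
def colorOf (f g : Fin r → Fin k) : Fin r ⊕ Fin r → Fin k ⊕ Fin k := Sum.map f g

/-- The multiset partition `κ_{a,b}(π)` obtained by coloring all elements of the set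
partition `π ∈ Π_{2(r)}`. -/
def coloredP (f g : Fin r → Fin k) (P : Finpartition (univ : Finset (Fin r ⊕ Fin r))) :
    Multiset (Multiset (Fin k ⊕ Fin k)) :=
  P.parts.val.map fun B => B.val.map (colorOf f g)

/-- `Q` is obtained from `P` by relabeling unbarred elements by `σ` and barred elements
by `τ`. -/
def relabeled (σ τ : Equiv.Perm (Fin r))
    (P Q : Finpartition (univ : Finset (Fin r ⊕ Fin r))) : Prop :=
  Q.parts = P.parts.image fun B => B.image (Sum.map ⇑σ ⇑τ)

namespace Multiset

variable {α β : Type*}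

theorem exists_add_of_map_eq_add {f : α → β} {s : Multiset α} {t u : Multiset β}
    (h : s.map f = t + u) : ∃ s₁ s₂, s = s₁ + s₂ ∧ s₁.map f = t ∧ s₂.map f = u := by
  classical
  induction t using Multiset.induction_on generalizing s with
  | empty => exact ⟨0, s, by simp, by simp, by simpa using h⟩
  | cons b t ih =>
    rw [cons_add, ← map_eq_cons] at h
    obtain ⟨a, ha, rfl, h⟩ := h
    obtain ⟨s₁, s₂, hs, rfl, rfl⟩ := ih h
    exact ⟨a ::ₘ s₁, s₂, by rw [cons_add, ← hs, cons_erase ha], map_cons _ _ _, rfl⟩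

theorem exists_sum_eq_of_sum_eq_map {f : α → β} {M : Multiset (Multiset β)} {s : Multiset α}
    (h : M.sum = s.map f) : ∃ T : Multiset (Multiset α), T.sum = s ∧ T.map (map f) = M := by
  induction M using Multiset.induction_on generalizing s with
  | empty => exact ⟨0, (map_eq_zero.1 h.symm).symm, rfl⟩
  | cons m M ih =>
    rw [sum_cons] at h
    obtain ⟨s₁, s₂, rfl, rfl, h₂⟩ := exists_add_of_map_eq_add h.symm
    obtain ⟨T, rfl, rfl⟩ := ih h₂.symm
    exact ⟨s₁ ::ₘ T, sum_cons _ _, map_cons _ _ _⟩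

end Multiset

namespace Finset

variable {α β C : Type*}

theorem card_fiber_coe_sort_eq_count [DecidableEq C] (s : Finset α) (c : α → C) (y : C) :
    Nat.card {a : s // c a = y} = (s.val.map c).count y := by
  rw [Nat.card_eq_fintype_card, Fintype.card_subtype, card_filter,
    sum_coe_sort s (fun a => if c a = y then 1 else 0), ← card_filter, Multiset.count_map,
    card_def, filter_val]
  simp only [eq_comm]

theorem exists_equiv_of_map_val_eq {s : Finset α} {t : Finset β} {c : α → C} {d : β → C}
    (h : s.val.map c = t.val.map d) : ∃ e : s ≃ t, ∀ x, d (e x) = c x := by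
  classical
  have hfiber (y : C) : Nat.card {a : s // c a = y} = Nat.card {b : t // d b = y} := by
    rw [card_fiber_coe_sort_eq_count, card_fiber_coe_sort_eq_count, h]
  exact ⟨Equiv.ofFiberEquiv fun y => (Finite.card_eq.mp (hfiber y)).some,
    Equiv.ofFiberEquiv_map (f := fun a : s => c a) (g := fun b : t => d b) _⟩

theorem map_map_val_image_image [DecidableEq α] (c : α → C) {e : α → α}
    (he : Function.Injective e) (hc : c ∘ e = c) (S : Finset (Finset α)) :
    (S.image (image e)).val.map (fun B => B.val.map c) = S.val.map (fun B => B.val.map c) := by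
  rw [image_val_of_injOn (image_injective he).injOn, Multiset.map_map]
  refine Multiset.map_congr rfl fun B _ => ?_
  rw [Function.comp_apply, image_val_of_injOn he.injOn, Multiset.map_map, hc]

end Finset

theorem Equiv.Perm.exists_sumMap_eq_of_comp_eq {α β γ δ : Type*} [Finite α] [Finite β]
    {f : α → γ} {g : β → δ} {e : Equiv.Perm (α ⊕ β)} (h : Sum.map f g ∘ e = Sum.map f g) :
    ∃ σ τ : Equiv.Perm _, f ∘ σ = f ∧ g ∘ τ = g ∧ ⇑e = Sum.map σ τ := by
  have hinl : Set.MapsTo e (Set.range Sum.inl) (Set.range Sum.inl) := by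
    rintro _ ⟨a, rfl⟩
    have := congrArg Sum.isLeft (congrFun h (Sum.inl a))
    simp only [Function.comp_apply, Sum.isLeft_map, Sum.isLeft_inl] at this
    obtain ⟨b, hb⟩ := Sum.isLeft_iff.1 this
    exact ⟨b, hb.symm⟩
  obtain ⟨⟨σ, τ⟩, rfl⟩ := Equiv.Perm.mem_sumCongrHom_range_of_perm_mapsTo_inl hinl
  refine ⟨σ, τ, funext fun a => ?_, funext fun b => ?_, rfl⟩
  · simpa using congrFun h (Sum.inl a)
  · simpa using congrFun h (Sum.inr b)

namespace Finpartition

variable {X C : Type*} [DecidableEq X]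

theorem exists_parts_map_val_eq {S : Finset X} {T : Multiset (Multiset X)}
    (hT : T.sum = S.val) (h0 : 0 ∉ T) : ∃ P : Finpartition S, P.parts.val.map Finset.val = T := by
  induction T using Multiset.induction_on generalizing S with
  | empty =>
    obtain rfl : S = ∅ := Finset.val_eq_zero.1 hT.symm
    exact ⟨Finpartition.empty _, rfl⟩
  | cons B T ih =>
    rw [Multiset.sum_cons] at hT
    obtain ⟨hB, hT', hdisj⟩ := Multiset.nodup_add.1 (hT ▸ S.nodup)
    obtain ⟨P, hP⟩ := ih (S := ⟨T.sum, hT'⟩) rfl fun h => h0 (Multiset.mem_cons_of_mem h)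
    have hBne : (⟨B, hB⟩ : Finset X) ≠ ⊥ := fun h => h0 <| by
      rw [show B = 0 from congrArg Finset.val h]
      exact Multiset.mem_cons_self 0 T
    have hdisj' : Disjoint (⟨T.sum, hT'⟩ : Finset X) ⟨B, hB⟩ :=
      Finset.disjoint_val.1 hdisj.symm
    have hsup : (⟨T.sum, hT'⟩ : Finset X) ⊔ ⟨B, hB⟩ = S := by
      ext x
      simp [← Finset.mem_val, ← hT, or_comm]
    have hnot : (⟨B, hB⟩ : Finset X) ∉ P.parts := fun h =>
      hBne (hdisj'.symm.eq_bot_of_le (P.le h))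
    refine ⟨P.extend hBne hdisj' hsup, ?_⟩
    rw [Finpartition.extend, Finset.insert_val_of_notMem hnot, Multiset.map_cons, hP]

theorem exists_perm_of_map_map_eq [Fintype X] (c : X → C) (P Q : Finpartition (univ : Finset X))
    (h : P.parts.val.map (fun B => B.val.map c) = Q.parts.val.map (fun B => B.val.map c)) :
    ∃ e : Equiv.Perm X, c ∘ e = c ∧ Q.parts = P.parts.image (Finset.image e) := by
  obtain ⟨φ, hφ⟩ := Finset.exists_equiv_of_map_val_eq h
  choose ψ hψ using fun B : P.parts => Finset.exists_equiv_of_map_val_eq (hφ B).symm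
  let e : Equiv.Perm X := (Equiv.subtypeUnivEquiv mem_univ).symm.trans <|
    P.equivSigmaParts.trans <| (Equiv.sigmaCongrRight ψ).trans <|
    (Equiv.sigmaCongrLeft φ).trans <| Q.equivSigmaParts.symm.trans <|
    Equiv.subtypeUnivEquiv mem_univ
  have he (B : P.parts) (x : X) (hx : x ∈ B.1) : e x = ψ B ⟨x, hx⟩ := by
    obtain ⟨B, hB⟩ := B
    obtain rfl : P.part x = B := P.part_eq_of_mem hB hx
    rfl
  have himage (B : P.parts) : B.1.image e = φ B := by
    refine eq_of_subset_of_card_le (image_subset_iff.2 fun x hx => he B x hx ▸ (ψ B _).2) ?_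
    rw [card_image_of_injective _ e.injective, ← Fintype.card_coe, ← Fintype.card_coe B.1,
      Fintype.card_congr (ψ B)]
  refine ⟨e, funext fun x => ?_, ?_⟩
  · rw [Function.comp_apply, he ⟨P.part x, P.part_mem.2 (mem_univ x)⟩ x (P.mem_part (mem_univ x))]
    exact hψ _ _
  · ext B'
    simp only [mem_image]
    refine ⟨fun hB' => ⟨_, (φ.symm ⟨B', hB'⟩).2, by rw [himage, Equiv.apply_symm_apply]⟩, ?_⟩
    rintro ⟨B, hB, rfl⟩
    exact himage ⟨B, hB⟩ ▸ (φ _).2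

end Finpartition

theorem stmt2_general (f g : Fin r → Fin k) :
    (∀ P Q : Finpartition (univ : Finset (Fin r ⊕ Fin r)),
        coloredP f g P = coloredP f g Q ↔
          ∃ σ τ : Equiv.Perm (Fin r), f ∘ ⇑σ = f ∧ g ∘ ⇑τ = g ∧ relabeled σ τ P Q) ∧
    (∀ M : Multiset (Multiset (Fin k ⊕ Fin k)),
        0 ∉ M → M.sum = (univ : Finset (Fin r ⊕ Fin r)).val.map (colorOf f g) →
          ∃ P : Finpartition (univ : Finset (Fin r ⊕ Fin r)), coloredP f g P = M) := by
  refine ⟨fun P Q => ⟨fun h => ?_, ?_⟩, fun M h0 hM => ?_⟩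
  · obtain ⟨e, he, hPQ⟩ := P.exists_perm_of_map_map_eq (colorOf f g) Q h
    obtain ⟨σ, τ, hσ, hτ, hστ⟩ := Equiv.Perm.exists_sumMap_eq_of_comp_eq he
    exact ⟨σ, τ, hσ, hτ, by rw [relabeled, hPQ, hστ]⟩
  · rintro ⟨σ, τ, hσ, hτ, hPQ⟩
    have hcolor : colorOf f g ∘ Sum.map σ τ = colorOf f g := by
      rw [colorOf, Sum.map_comp_map, hσ, hτ]
    rw [coloredP, coloredP, hPQ, Finset.map_map_val_image_image _
      (Sum.map_injective.2 ⟨σ.injective, τ.injective⟩) hcolor]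
  · obtain ⟨T, hT, rfl⟩ := Multiset.exists_sum_eq_of_sum_eq_map hM
    obtain ⟨P, hP⟩ := Finpartition.exists_parts_map_val_eq hT fun h0T =>
      h0 (Multiset.mem_map_of_mem _ h0T)
    exact ⟨P, by rw [coloredP, ← hP, Multiset.map_map]; rfl⟩

/-- For weak compositions `a, b` of `r` of length `k` (encoded by their
monotone coloring maps `f, g : Fin r → Fin k`), the coloring map `κ_{a,b}` induces a
bijection between orbits of set partitions of `[r] ∪ [r̄]` under `S_a × S_b` and multiset
partitions whose unbarred and barred multiplicities are given by `a` and `b`: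
two set partitions have the same colored image iff they lie in the same `S_a × S_b`-orbit,
and every such multiset partition is a colored image. -/
theorem stmt2 (f g : Fin r → Fin k) (hf : Monotone f) (hg : Monotone g) :
    (∀ P Q : Finpartition (univ : Finset (Fin r ⊕ Fin r)),
        coloredP f g P = coloredP f g Q ↔
          ∃ σ τ : Equiv.Perm (Fin r), f ∘ ⇑σ = f ∧ g ∘ ⇑τ = g ∧ relabeled σ τ P Q) ∧
    (∀ M : Multiset (Multiset (Fin k ⊕ Fin k)),
        0 ∉ M → M.sum = (univ : Finset (Fin r ⊕ Fin r)).val.map (colorOf f g) →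
          ∃ P : Finpartition (univ : Finset (Fin r ⊕ Fin r)), coloredP f g P = M) :=
  stmt2_general f g
end

section
/- Taking the union over all pairs of weak compositions a, b of r of length k, the induced maps κ̄_{a,b} give a bijection between the disjoint union ⨄_{a,b ∈ W_{r,k}} Π_{2(r)}/(S_a × S_b) and the set Π̃_{2(r),k} of all multiset partitions with r elements from [k] and r elements from {1̄,…,k̄}. -/
/-!
The colors of the elements of `κ_{a,b}(π)` form the multiset with content `a` on `[k]` and `b` on
`[k̄]`, and a monotone coloring is determined by its multiset of values, so the colored image
recovers `(a, b)`. For fixed colorings, two colored partitions agree iff a color-preserving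
permutation carries the blocks of one onto the blocks of the other: pair off blocks with equal
colored contents, then pair off elements of equal color inside matched blocks. A color-preserving
permutation of `[r] ∪ [r̄]` keeps both rows, so it lies in `S_a × S_b`. Conversely, any multiset
partition is reached by sorting its colors into monotone colorings and cutting `[r] ∪ [r̄]` into
blocks one block of `M` at a time.
-/

open Finset

variable {r k : ℕ}

namespace Multiset

variable {α β γ : Type*}

theorem exists_eq_map_inl_add_map_inr (m : Multiset (β ⊕ γ)) :
    ∃ (s : Multiset β) (t : Multiset γ), m = s.map Sum.inl + t.map Sum.inr := by
  induction m using Multiset.induction_on with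
  | empty => exact ⟨0, 0, rfl⟩
  | cons x m ih =>
    obtain ⟨s, t, rfl⟩ := ih
    rcases x with b | c
    · exact ⟨b ::ₘ s, t, by simp⟩
    · exact ⟨s, c ::ₘ t, by simp⟩

theorem map_inl_add_map_inr_inj {s s' : Multiset β} {t t' : Multiset γ} :
    s.map Sum.inl + t.map Sum.inr = s'.map Sum.inl + t'.map Sum.inr ↔ s = s' ∧ t = t' := by
  refine ⟨fun h => ⟨?_, ?_⟩, fun ⟨hs, ht⟩ => hs ▸ ht ▸ rfl⟩
  · refine map_injective (f := (Sum.inl : β → β ⊕ γ)) Sum.inl_injective ?_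
    simpa [filter_add, filter_map, Function.comp_def] using congrArg (filter (·.isLeft)) h
  · refine map_injective (f := (Sum.inr : γ → β ⊕ γ)) Sum.inr_injective ?_
    simpa [filter_add, filter_map, Function.comp_def] using congrArg (filter (·.isRight)) h

theorem exists_eq_add_of_map_eq_add [DecidableEq α] {c : α → β} {m : Multiset α}
    {b s : Multiset β} (h : m.map c = b + s) :
    ∃ u v, m = u + v ∧ u.map c = b ∧ v.map c = s := by
  induction b using Multiset.induction_on generalizing m with
  | empty => exact ⟨0, m, by simp, rfl, by simpa using h⟩
  | cons x b ih =>
    obtain ⟨a, ha, rfl, hm⟩ := (map_eq_cons c m _ x).2 (by rw [h, cons_add])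
    obtain ⟨u, v, huv, rfl, rfl⟩ := ih hm
    refine ⟨a ::ₘ u, v, ?_, map_cons _ _ _, rfl⟩
    rw [cons_add, ← huv, cons_erase ha]

theorem map_univ_sumMap {δ : Type*} [Fintype α] [Fintype β] (f : α → γ) (g : β → δ) :
    univ.val.map (Sum.map f g) = (univ.val.map f).map Sum.inl + (univ.val.map g).map Sum.inr := by
  have huniv : (univ : Finset (α ⊕ β)).val = univ.val.map Sum.inl + univ.val.map Sum.inr := by
    rw [← univ_disjSum_univ]
    rfl
  rw [huniv, map_add, map_map, map_map, map_map, map_map]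
  rfl

end Multiset

theorem eq_of_monotone_of_map_univ_eq {n : ℕ} {β : Type*} [PartialOrder β] {f f' : Fin n → β}
    (hf : Monotone f) (hf' : Monotone f') (h : univ.val.map f = univ.val.map f') : f = f' := by
  rw [Fin.univ_val_map, Fin.univ_val_map] at h
  exact List.ofFn_injective (List.Perm.eq_of_pairwise'
    (List.sortedLE_ofFn_iff.2 hf).pairwise (List.sortedLE_ofFn_iff.2 hf').pairwise
    (Multiset.coe_eq_coe.1 h))

theorem exists_monotone_map_univ_eq {n : ℕ} {β : Type*} [LinearOrder β] {s : Multiset β}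
    (hs : Multiset.card s = n) : ∃ f : Fin n → β, Monotone f ∧ univ.val.map f = s := by
  set l := s.sort (· ≤ ·)
  have hlen : l.length = n := (Multiset.length_sort _).trans hs
  refine ⟨fun i => l.get (Fin.cast hlen.symm i), fun i j hij => ?_, ?_⟩
  · exact (Multiset.pairwise_sort s _).rel_get_of_le hij
  · rw [Fin.univ_val_map, ← Multiset.sort_eq s (· ≤ ·)]
    congr 1
    exact List.ext_get (by simp [hs]) fun i _ _ => by simp [l]

section FiberEquiv

variable {α β γ : Type*} [Fintype α] [Fintype β] [DecidableEq γ]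

theorem exists_equiv_comp_eq_of_card_fiber_eq {f : α → γ} {g : β → γ}
    (h : ∀ c, #{a | f a = c} = #{b | g b = c}) : ∃ e : α ≃ β, ∀ a, g (e a) = f a := by
  have hcard c : Fintype.card {a // f a = c} = Fintype.card {b // g b = c} := by
    simpa only [Fintype.card_subtype] using h c
  exact ⟨.ofFiberEquiv fun c => Fintype.equivOfCardEq (hcard c), Equiv.ofFiberEquiv_map _⟩

theorem exists_equiv_comp_eq_of_map_univ_eq {f : α → γ} {g : β → γ}
    (h : univ.val.map f = univ.val.map g) : ∃ e : α ≃ β, ∀ a, g (e a) = f a := by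
  refine exists_equiv_comp_eq_of_card_fiber_eq fun c => ?_
  have := congrArg (Multiset.count c) h
  simp only [Multiset.count_map] at this
  simpa only [Finset.card_def, Finset.filter_val, eq_comm] using this

end FiberEquiv

theorem Equiv.Perm.exists_eq_sumMap_of_comp_eq {α β γ δ : Type*} [Finite α] [Finite β]
    {f : α → γ} {g : β → δ} {π : Equiv.Perm (α ⊕ β)} (h : Sum.map f g ∘ π = Sum.map f g) :
    ∃ (σ : Equiv.Perm α) (τ : Equiv.Perm β), f ∘ σ = f ∧ g ∘ τ = g ∧ ⇑π = Sum.map σ τ := by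
  have hl (a : α) : ∃ b, π (.inl a) = .inl b ∧ f b = f a := by
    have := congrFun h (.inl a)
    rcases hx : π (.inl a) with b | b <;> simp_all
  have hr (a : β) : ∃ b, π (.inr a) = .inr b ∧ g b = g a := by
    have := congrFun h (.inr a)
    rcases hx : π (.inr a) with b | b <;> simp_all
  choose σ hσ hfσ using hl
  choose τ hτ hgτ using hr
  have hσ_inj : Function.Injective σ := fun a a' e =>
    Sum.inl_injective (π.injective (by rw [hσ, hσ, e]))
  have hτ_inj : Function.Injective τ := fun a a' e =>
    Sum.inr_injective (π.injective (by rw [hτ, hτ, e]))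
  refine ⟨.ofBijective σ (Finite.injective_iff_bijective.1 hσ_inj),
    .ofBijective τ (Finite.injective_iff_bijective.1 hτ_inj), funext hfσ, funext hgτ, ?_⟩
  funext x
  rcases x with a | a
  · exact hσ a
  · exact hτ a

theorem Finset.map_image_image_of_comp_eq {α β : Type*} [DecidableEq α] {c : α → β} {φ : α → α}
    (hφ : Function.Injective φ) (hc : c ∘ φ = c) (S : Finset (Finset α)) :
    (S.image (image φ)).val.map (fun B => B.val.map c) = S.val.map (fun B => B.val.map c) := by
  rw [image_val_of_injOn (image_injective hφ).injOn, Multiset.map_map]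
  refine Multiset.map_congr rfl fun B _ => ?_
  change (B.image φ).val.map c = _
  rw [image_val_of_injOn hφ.injOn, Multiset.map_map, hc]

namespace Finpartition

variable {α β : Type*} [DecidableEq α]

theorem sum_map_val_parts {t : Finset α} (P : Finpartition t) :
    (P.parts.val.map Finset.val).sum = t.val := by
  have h := congrArg Finset.val (P.parts.disjiUnion_eq_biUnion id P.disjoint)
  rwa [P.biUnion_parts, Finset.disjiUnion_val] at h

theorem sum_map_map_parts (c : α → β) {t : Finset α} (P : Finpartition t) :
    (P.parts.val.map fun B => B.val.map c).sum = t.val.map c := by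
  rw [← P.sum_map_val_parts]
  exact ((Multiset.map_join c _).trans (congrArg Multiset.join (Multiset.map_map _ _ _))).symm

theorem exists_map_parts_eq (c : α → β) {M : Multiset (Multiset β)} (hM : 0 ∉ M)
    {t : Finset α} (ht : t.val.map c = M.sum) :
    ∃ P : Finpartition t, P.parts.val.map (fun B => B.val.map c) = M := by
  induction M using Multiset.induction_on generalizing t with
  | empty =>
    obtain rfl : t = ∅ := by simpa using ht
    exact ⟨Finpartition.empty _, rfl⟩
  | cons b M ih =>
    rw [Multiset.sum_cons] at ht
    obtain ⟨u, v, htuv, rfl, hv⟩ := Multiset.exists_eq_add_of_map_eq_add ht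
    obtain ⟨hu, hv', huv⟩ := Multiset.nodup_add.1 (htuv ▸ t.nodup)
    set U : Finset α := ⟨u, hu⟩
    set V : Finset α := ⟨v, hv'⟩
    obtain ⟨P, hP⟩ := ih (fun h => hM (Multiset.mem_cons_of_mem h)) (t := V) hv
    have hU : U ≠ ⊥ := fun h => hM (by rw [show u = 0 from congrArg Finset.val h]; simp)
    have hdisj : Disjoint V U := Finset.disjoint_val.1 huv.symm
    have hsup : V ⊔ U = t := by
      ext x
      simp [U, V, ← Finset.mem_val, htuv, or_comm]
    refine ⟨P.extend hU hdisj hsup, ?_⟩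
    rw [extend_parts, Finset.insert_val_of_notMem fun h => hU (hdisj.symm.eq_bot_of_le (P.le h)),
      Multiset.map_cons, hP]

section Fintype

variable [Fintype α] [DecidableEq β]

theorem card_filter_part_eq_and_eq (P : Finpartition (univ : Finset α)) {B : Finset α}
    (hB : B ∈ P.parts) (c : α → β) (d : β) :
    #{x | P.part x = B ∧ c x = d} = (B.val.map c).count d := by
  rw [Multiset.count_map, ← Finset.filter_val, ← Finset.card_def]
  congr 1
  ext x
  simp [P.part_eq_iff_mem hB, eq_comm]

theorem exists_perm_of_map_parts_eq (c : α → β) {P Q : Finpartition (univ : Finset α)}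
    (h : P.parts.val.map (fun B => B.val.map c) = Q.parts.val.map (fun B => B.val.map c)) :
    ∃ π : Equiv.Perm α, c ∘ π = c ∧ Q.parts = P.parts.image (image π) := by
  obtain ⟨e, he⟩ : ∃ e : P.parts ≃ Q.parts, ∀ B, (e B).1.val.map c = B.1.val.map c :=
    exists_equiv_comp_eq_of_map_univ_eq (f := fun B : P.parts => B.1.val.map c)
      (g := fun B : Q.parts => B.1.val.map c)
      ((Multiset.attach_map_val' _ _).trans (h.trans (Multiset.attach_map_val' _ _).symm))
  -- `e` pairs blocks with equal colored contents; `π` then pairs elements with the same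
  -- (paired block, color).
  let partP : α → P.parts := fun x => ⟨P.part x, P.part_mem.2 (mem_univ x)⟩
  let partQ : α → Q.parts := fun x => ⟨Q.part x, Q.part_mem.2 (mem_univ x)⟩
  obtain ⟨π, hπ⟩ : ∃ π : Equiv.Perm α, ∀ x, (partQ (π x), c (π x)) = (e (partP x), c x) := by
    refine exists_equiv_comp_eq_of_card_fiber_eq (f := fun x => (e (partP x), c x))
      (g := fun x => (partQ x, c x)) fun ⟨C, d⟩ => ?_
    have hP : #{x | (e (partP x), c x) = (C, d)} = #{x | P.part x = (e.symm C).1 ∧ c x = d} := by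
      congr 1
      ext x
      simp [partP, ← e.eq_symm_apply, ← Subtype.val_inj]
    have hQ : #{x | (partQ x, c x) = (C, d)} = #{x | Q.part x = C.1 ∧ c x = d} := by
      congr 1
      ext x
      simp [partQ, ← Subtype.val_inj]
    rw [hP, hQ, card_filter_part_eq_and_eq _ (e.symm C).2, card_filter_part_eq_and_eq _ C.2,
      ← he, Equiv.apply_symm_apply]
  have himage (B : P.parts) : B.1.image π = (e B).1 := by
    ext y
    obtain ⟨x, rfl⟩ := π.surjective y
    rw [π.injective.mem_finset_image, ← Q.part_eq_iff_mem (e B).2, ← P.part_eq_iff_mem B.2]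
    change P.part x = B.1 ↔ (partQ (π x)).1 = (e B).1
    rw [show partQ (π x) = e (partP x) from congrArg Prod.fst (hπ x), Subtype.val_inj,
      e.apply_eq_iff_eq, ← Subtype.val_inj]
  refine ⟨π, funext fun x => congrArg Prod.snd (hπ x), ?_⟩
  ext C
  simp only [mem_image]
  constructor
  · intro hC
    exact ⟨_, (e.symm ⟨C, hC⟩).2, by rw [himage, Equiv.apply_symm_apply]⟩
  · rintro ⟨B, hB, rfl⟩
    exact himage ⟨B, hB⟩ ▸ (e _).2

end Fintype

end Finpartition

theorem coloredP_eq_coloredP_iff {f g f' g' : Fin r → Fin k} (hf : Monotone f) (hg : Monotone g)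
    (hf' : Monotone f') (hg' : Monotone g') {P Q : Finpartition (univ : Finset (Fin r ⊕ Fin r))} :
    coloredP f g P = coloredP f' g' Q ↔
      f = f' ∧ g = g' ∧
        ∃ σ τ : Equiv.Perm (Fin r), f ∘ ⇑σ = f ∧ g ∘ ⇑τ = g ∧ relabeled σ τ P Q := by
  constructor
  · intro h
    have hcolors := congrArg Multiset.sum h
    rw [coloredP, coloredP, P.sum_map_map_parts, Q.sum_map_map_parts, colorOf, colorOf,
      Multiset.map_univ_sumMap, Multiset.map_univ_sumMap,
      Multiset.map_inl_add_map_inr_inj] at hcolors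
    obtain rfl := eq_of_monotone_of_map_univ_eq hf hf' hcolors.1
    obtain rfl := eq_of_monotone_of_map_univ_eq hg hg' hcolors.2
    obtain ⟨π, hπ, hPQ⟩ := Finpartition.exists_perm_of_map_parts_eq _ h
    obtain ⟨σ, τ, hσ, hτ, hπστ⟩ := Equiv.Perm.exists_eq_sumMap_of_comp_eq hπ
    exact ⟨rfl, rfl, σ, τ, hσ, hτ, by rw [relabeled, hPQ, hπστ]⟩
  · rintro ⟨rfl, rfl, σ, τ, hσ, hτ, hrel⟩
    have hcolor : colorOf f g ∘ Sum.map σ τ = colorOf f g := by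
      rw [colorOf, Sum.map_comp_map, hσ, hτ]
    rw [coloredP, coloredP, hrel]
    exact (map_image_image_of_comp_eq (Equiv.sumCongr σ τ).injective hcolor _).symm

theorem exists_coloredP_eq {M : Multiset (Multiset (Fin k ⊕ Fin k))} (h0 : 0 ∉ M)
    (hL : M.sum.countP (fun x => x.isLeft = true) = r)
    (hR : M.sum.countP (fun x => x.isRight = true) = r) :
    ∃ (f g : Fin r → Fin k) (P : Finpartition (univ : Finset (Fin r ⊕ Fin r))),
      Monotone f ∧ Monotone g ∧ coloredP f g P = M := by
  obtain ⟨s, t, hst⟩ := M.sum.exists_eq_map_inl_add_map_inr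
  have hs : Multiset.card s = r := by simpa [hst, Multiset.countP_map, Function.comp_def] using hL
  have ht : Multiset.card t = r := by simpa [hst, Multiset.countP_map, Function.comp_def] using hR
  obtain ⟨f, hf, rfl⟩ := exists_monotone_map_univ_eq hs
  obtain ⟨g, hg, rfl⟩ := exists_monotone_map_univ_eq ht
  obtain ⟨P, hP⟩ := Finpartition.exists_map_parts_eq (colorOf f g) h0 (t := univ)
    (by rw [colorOf, Multiset.map_univ_sumMap, hst])
  exact ⟨f, g, P, hf, hg, hP⟩

/-- Taking the union over all pairs of weak compositions `a, b` of `r`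
of length `k` (encoded by their monotone coloring maps `f, g`), the maps `κ̄_{a,b}` give
a bijection between `⨄_{a,b} Π_{2(r)}/(S_a × S_b)` and the set `Π̃_{2(r),k}` of multiset
partitions with `r` elements from `[k]` and `r` elements from `[k̄]`: two colored images
(possibly for different pairs of compositions) agree iff the compositions agree and the
set partitions lie in the same orbit, and every multiset partition in `Π̃_{2(r),k}` arises
as a colored image. -/
theorem stmt3 :
    (∀ f g f' g' : Fin r → Fin k, Monotone f → Monotone g → Monotone f' → Monotone g' →
      ∀ P Q : Finpartition (univ : Finset (Fin r ⊕ Fin r)),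
        coloredP f g P = coloredP f' g' Q ↔
          (f = f' ∧ g = g' ∧
            ∃ σ τ : Equiv.Perm (Fin r), f ∘ ⇑σ = f ∧ g ∘ ⇑τ = g ∧ relabeled σ τ P Q)) ∧
    (∀ M : Multiset (Multiset (Fin k ⊕ Fin k)),
      0 ∉ M →
      M.sum.countP (fun x => x.isLeft = true) = r →
      M.sum.countP (fun x => x.isRight = true) = r →
      ∃ (f g : Fin r → Fin k) (P : Finpartition (univ : Finset (Fin r ⊕ Fin r))),
        Monotone f ∧ Monotone g ∧ coloredP f g P = M) :=
  ⟨fun _ _ _ _ hf hg hf' hg' _ _ => coloredP_eq_coloredP_iff hf hg hf' hg',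
    fun _ => exists_coloredP_eq⟩
end

section
/- Let A be an algebra, V a semisimple A-module, and e₁,…,e_m ∈ End_A(V) idempotents. Then there is an algebra isomorphism End_A(⊕_{i=1}^m e_i V) ≅ ⊕_{i,j=1}^m e_i End_A(V) e_j, where the product on the right is given by (e_i φ e_j)·(e_k ψ e_ℓ) = δ_{jk} e_i (φ e_j ψ) e_ℓ. -/
/-!
Each `e_i V` is a direct summand of `V`, cut out by the corestriction `π_i : V → e_i V` of `e_i`
and the inclusion `ι_i : e_i V → V`, with `π_i ι_i = 1` and `ι_i π_i = e_i`. An endomorphism `F`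
of `⊕ e_i V` is the same as its matrix of blocks `F_{ij} : e_j V → e_i V`, and `F_{ij}` is the
same as the corner element `ι_i F_{ij} π_j ∈ e_i End_A(V) e_j`. Composing blocks inserts
`π_l ι_l = 1` in the middle, so block composition becomes the product of the painted algebra.
-/

open Finset

/-- Absorption: if `a` is idempotent and `a * x * b = x` then `a * x = x`. -/
theorem absorb_left {B : Type*} [Ring B] {a b x : B} (ha : a * a = a)
    (h : a * x * b = x) : a * x = x := by
  conv_lhs => rw [← h]
  rw [← mul_assoc, ← mul_assoc, ha, h]

theorem absorb_right {B : Type*} [Ring B] {a b x : B} (hb : b * b = b)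
    (h : a * x * b = x) : x * b = x := by
  conv_lhs => rw [← h]
  rw [mul_assoc (a * x) b b, hb, h]

/-- A family of distinguished idempotents in a ring `B`. -/
structure IdemFamily (B : Type*) [Ring B] (m : ℕ) where
  e : Fin m → B
  idem : ∀ i, e i * e i = e i

variable {B : Type*} [Ring B] {m : ℕ}

/-- The painted algebra `B̃ = ⊕_{i,j} e_i B e_j`, realized as the non-unital subring of
`m × m` matrices over `B` whose `(i,j)` entry lies in `e_i B e_j`.  Its multiplication
`(e_i b e_j)·(e_k b' e_ℓ) = δ_{jk} e_i b e_j b' e_ℓ` is exactly matrix multiplication. -/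
def paintedSubring (E : IdemFamily B m) : NonUnitalSubring (Matrix (Fin m) (Fin m) B) where
  carrier := {x | ∀ i j, E.e i * x i j * E.e j = x i j}
  zero_mem' := by intro i j; simp
  add_mem' := by
    intro x y hx hy i j
    have : (x + y) i j = x i j + y i j := rfl
    rw [this, mul_add, add_mul, hx i j, hy i j]
  neg_mem' := by
    intro x hx i j
    have : (-x) i j = -(x i j) := rfl
    rw [this, mul_neg, neg_mul, hx i j]
  mul_mem' := by
    intro x y hx hy i j
    show E.e i * (x * y) i j * E.e j = (x * y) i j
    simp only [Matrix.mul_apply, Finset.mul_sum, Finset.sum_mul]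
    refine Finset.sum_congr rfl fun l _ => ?_
    rw [← mul_assoc, absorb_left (E.idem i) (hx i l), mul_assoc,
      absorb_right (E.idem j) (hy l j)]

/-- The painted algebra associated to a family of idempotents. -/
def PaintedAlgebra (E : IdemFamily B m) : Type _ := ↥(paintedSubring E)

instance (E : IdemFamily B m) : NonUnitalRing (PaintedAlgebra E) :=
  inferInstanceAs (NonUnitalRing ↥(paintedSubring E))

/-- The painted algebra is a (unital) ring, with unit the diagonal matrix `diag(e₁,…,e_m)`. -/
instance (E : IdemFamily B m) : Ring (PaintedAlgebra E) :=
  { (inferInstanceAs (NonUnitalRing (PaintedAlgebra E)) : NonUnitalRing (PaintedAlgebra E)) with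
    one := ⟨Matrix.diagonal E.e, by
      intro i j
      by_cases h : i = j
      · subst h; simp [Matrix.diagonal_apply_eq, E.idem i]
      · simp [Matrix.diagonal_apply_ne _ h]⟩
    one_mul := by
      intro x
      apply Subtype.ext
      ext i j
      show (Matrix.diagonal E.e * x.val) i j = x.val i j
      rw [Matrix.diagonal_mul]
      exact absorb_left (E.idem i) (x.prop i j)
    mul_one := by
      intro x
      apply Subtype.ext
      ext i j
      show (x.val * Matrix.diagonal E.e) i j = x.val i j
      rw [Matrix.mul_diagonal]
      exact absorb_right (E.idem j) (x.prop i j) }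

open scoped DirectSum

namespace LinearMap

section Sum

variable {R M N P ι : Type*} [Semiring R] [AddCommMonoid M] [AddCommMonoid N] [AddCommMonoid P]
  [Module R M] [Module R N] [Module R P] {s : Finset ι}

theorem comp_finsetSum (g : N →ₗ[R] P) (f : ι → M →ₗ[R] N) :
    g ∘ₗ ∑ i ∈ s, f i = ∑ i ∈ s, g ∘ₗ f i := by
  ext
  simp

theorem finsetSum_comp (g : ι → N →ₗ[R] P) (f : M →ₗ[R] N) :
    (∑ i ∈ s, g i) ∘ₗ f = ∑ i ∈ s, g i ∘ₗ f := by
  ext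
  simp

end Sum

section Idempotent

variable {R M N : Type*} [Semiring R] [AddCommMonoid M] [Module R M] [AddCommMonoid N]
  [Module R N] {f : Module.End R M} (hf : IsIdempotentElem f)
include hf

theorem rangeRestrict_comp_subtype_comp (g : N →ₗ[R] range f) :
    f.rangeRestrict ∘ₗ (range f).subtype ∘ₗ g = g := by
  ext x
  exact (IsIdempotentElem.mem_range_iff hf).1 (g x).2

omit [AddCommMonoid N] [Module R N] in
theorem comp_subtype_range : f ∘ₗ (range f).subtype = (range f).subtype :=
  (IsIdempotentElem.comp_eq_right_iff hf _).2 (Submodule.range_subtype _).le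

omit [AddCommMonoid N] [Module R N] in
theorem rangeRestrict_comp_self : f.rangeRestrict ∘ₗ f = f.rangeRestrict := by
  ext x
  exact congr($hf x)

end Idempotent

end LinearMap

namespace DirectSum

variable {R : Type*} [Semiring R] {ι : Type*} [Fintype ι] [DecidableEq ι] {M : ι → Type*}
  [∀ i, AddCommMonoid (M i)] [∀ i, Module R (M i)] {X : Type*} [AddCommMonoid X] [Module R X]

theorem sum_lof_comp_component : ∑ i, lof R ι M i ∘ₗ component R ι M i = LinearMap.id :=
  LinearMap.ext fun x => by simpa [lof_eq_of, ← apply_eq_component] using sum_univ_of x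

theorem component_comp_sum_lof_comp (g : ∀ k, X →ₗ[R] M k) (i : ι) :
    component R ι M i ∘ₗ ∑ k, lof R ι M k ∘ₗ g k = g i := by
  ext x
  simp [component.of]

theorem sum_comp_component_comp_lof (g : ∀ k, M k →ₗ[R] X) (j : ι) :
    (∑ k, g k ∘ₗ component R ι M k) ∘ₗ lof R ι M j = g j := by
  ext x
  simp [component.of, apply_dite]

end DirectSum

open DirectSum LinearMap

section CornerMatrix

variable {A : Type*} [Ring A] {V : Type*} [AddCommGroup V] [Module A V]
  {ι : Type*} [Fintype ι] [DecidableEq ι] (e : ι → Module.End A V)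

def toCornerMatrix (F : Module.End A (⨁ i, range (e i))) : Matrix ι ι (Module.End A V) :=
  fun i j => (range (e i)).subtype ∘ₗ component A ι _ i ∘ₗ F ∘ₗ lof A ι _ j ∘ₗ (e j).rangeRestrict

def ofCornerMatrix (x : Matrix ι ι (Module.End A V)) : Module.End A (⨁ i, range (e i)) :=
  ∑ i, lof A ι _ i ∘ₗ
    ((e i).rangeRestrict ∘ₗ ∑ j, (x i j ∘ₗ (range (e j)).subtype) ∘ₗ component A ι _ j)

variable {e}

omit [Fintype ι] in
theorem toCornerMatrix_add (F G : Module.End A (⨁ i, range (e i))) :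
    toCornerMatrix e (F + G) = toCornerMatrix e F + toCornerMatrix e G := by
  ext1 i j
  simp only [toCornerMatrix, Matrix.add_apply, add_comp, comp_add]

theorem toCornerMatrix_ofCornerMatrix {x : Matrix ι ι (Module.End A V)}
    (hx : ∀ i j, e i * x i j * e j = x i j) : toCornerMatrix e (ofCornerMatrix e x) = x := by
  ext1 i j
  calc toCornerMatrix e (ofCornerMatrix e x) i j
      = (range (e i)).subtype ∘ₗ ((component A ι _ i ∘ₗ ofCornerMatrix e x) ∘ₗ lof A ι _ j) ∘ₗ
          (e j).rangeRestrict := rfl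
    _ = (range (e i)).subtype ∘ₗ (e i).rangeRestrict ∘ₗ x i j ∘ₗ (range (e j)).subtype ∘ₗ
          (e j).rangeRestrict := by
      rw [ofCornerMatrix, component_comp_sum_lof_comp, comp_assoc (lof A ι _ j),
        sum_comp_component_comp_lof]
      rfl
    _ = x i j := hx i j

variable (he : ∀ i, IsIdempotentElem (e i))
include he

omit [Fintype ι] in
theorem toCornerMatrix_mem (F : Module.End A (⨁ i, range (e i))) (i j : ι) :
    e i * toCornerMatrix e F i j * e j = toCornerMatrix e F i j := by
  simp only [toCornerMatrix, Module.End.mul_eq_comp, comp_assoc, rangeRestrict_comp_self (he j)]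
  rw [← comp_assoc _ _ (e i), comp_subtype_range (he i)]

theorem toCornerMatrix_mul (F G : Module.End A (⨁ i, range (e i))) :
    toCornerMatrix e (F * G) = toCornerMatrix e F * toCornerMatrix e G := by
  ext1 i j
  have hFG : F * G = F ∘ₗ (∑ l, lof A ι _ l ∘ₗ component A ι _ l) ∘ₗ G := by
    rw [sum_lof_comp_component, id_comp, Module.End.mul_eq_comp]
  simp only [toCornerMatrix, Matrix.mul_apply, hFG, finsetSum_comp, comp_finsetSum,
    Module.End.mul_eq_comp]
  refine Finset.sum_congr rfl fun l _ => ?_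
  simp only [comp_assoc]
  rw [rangeRestrict_comp_subtype_comp (he l)]

theorem ofCornerMatrix_toCornerMatrix (F : Module.End A (⨁ i, range (e i))) :
    ofCornerMatrix e (toCornerMatrix e F) = F := by
  simp only [ofCornerMatrix, toCornerMatrix, comp_assoc, rangeRestrict_comp_subtype_comp (he _)]
  simp only [← comp_finsetSum, sum_lof_comp_component, comp_id,
    rangeRestrict_comp_subtype_comp (he _)]
  simp only [← comp_assoc, ← finsetSum_comp, sum_lof_comp_component, id_comp]

end CornerMatrix

def endDirectSumRangeEquivPaintedAlgebra {A : Type*} [Ring A] {V : Type*} [AddCommGroup V]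
    [Module A V] {m : ℕ} (e : Fin m → Module.End A V) (he : ∀ i, e i * e i = e i) :
    Module.End A (⨁ i, range (e i)) ≃+* PaintedAlgebra ⟨e, he⟩ where
  toFun F := ⟨toCornerMatrix e F, toCornerMatrix_mem he F⟩
  invFun x := ofCornerMatrix e x.1
  left_inv := ofCornerMatrix_toCornerMatrix he
  right_inv x := Subtype.ext (toCornerMatrix_ofCornerMatrix x.2)
  map_mul' F G := Subtype.ext (toCornerMatrix_mul he F G)
  map_add' F G := Subtype.ext (toCornerMatrix_add F G)

theorem stmt4_general {A : Type*} [Ring A] (V : Type*) [AddCommGroup V] [Module A V]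
    {m : ℕ} (e : Fin m → Module.End A V)
    (he : ∀ i, e i * e i = e i) :
    Nonempty ((Module.End A (⨁ i : Fin m, ↥(LinearMap.range (e i)))) ≃+*
      PaintedAlgebra ⟨e, he⟩) :=
  ⟨endDirectSumRangeEquivPaintedAlgebra e he⟩

/-- Let `A` be an algebra, `V` a semisimple `A`-module and
`e₁,…,e_m ∈ End_A(V)` idempotents.  Then there is an algebra isomorphism
`End_A(⊕_{i=1}^m e_i V) ≅ ⊕_{i,j=1}^m e_i End_A(V) e_j`, where the right-hand side is the
painted algebra with product `(e_i φ e_j)·(e_k ψ e_ℓ) = δ_{jk} e_i (φ e_j ψ) e_ℓ`. -/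
theorem stmt4 {A : Type*} [Ring A] (V : Type*) [AddCommGroup V] [Module A V]
    [IsSemisimpleModule A V] {m : ℕ} (e : Fin m → Module.End A V)
    (he : ∀ i, e i * e i = e i) :
    Nonempty ((Module.End A (⨁ i : Fin m, ↥(LinearMap.range (e i)))) ≃+*
      PaintedAlgebra ⟨e, he⟩) :=
  stmt4_general V e he
end

section
/- Define the nonbasic weight nbw(π̃) of a multiset partition π̃ ∈ Π̃_{2(r),k} as the sum of |B̃| over all nonbasic blocks B̃ (blocks that are neither singletons nor vertical bars {i, ī}). If the diagram-like basis element D_ν̃ appears with nonzero coefficient in the product D_{π̃₁} D_{π̃₂} in the multiset partition algebra MP_{r,k}(n), then nbw(ν̃) ≤ nbw(π̃₁) + nbw(π̃₂). -/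
open Finset
open scoped Classical

variable {r k : ℕ}

/-- Two elements lie in a common block of the set partition `P`. -/
def memRel (P : Finpartition (univ : Finset (Fin r ⊕ Fin r))) (x y : Fin r ⊕ Fin r) : Prop :=
  ∃ B ∈ P.parts, x ∈ B ∧ y ∈ B

/-- Embedding of the two-row alphabet of the first (upper) diagram into the three-row
alphabet `top ⊕ (middle ⊕ bottom)`: top ↦ top, bottom ↦ middle. -/
def emb12 : Fin r ⊕ Fin r → Fin r ⊕ (Fin r ⊕ Fin r) := Sum.map id Sum.inl

/-- Embedding of the two-row alphabet of the second (lower) diagram: top ↦ middle,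
bottom ↦ bottom. -/
def emb23 : Fin r ⊕ Fin r → Fin r ⊕ (Fin r ⊕ Fin r) := Sum.inr

/-- Embedding of the outer two rows: top ↦ top, bottom ↦ bottom. -/
def emb13 : Fin r ⊕ Fin r → Fin r ⊕ (Fin r ⊕ Fin r) := Sum.map id Sum.inr

/-- The relation on the three-tier diagram generated by the blocks of the two stacked
diagrams (identifying the bottom row of the first with the top row of the second). -/
def stackRel (P₁ P₂ : Finpartition (univ : Finset (Fin r ⊕ Fin r))) :
    Fin r ⊕ (Fin r ⊕ Fin r) → Fin r ⊕ (Fin r ⊕ Fin r) → Prop :=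
  Relation.EqvGen fun x y =>
    (∃ a b, emb12 a = x ∧ emb12 b = y ∧ memRel P₁ a b) ∨
    (∃ a b, emb23 a = x ∧ emb23 b = y ∧ memRel P₂ a b)

/-- `ν` is the diagram product of `P₁` and `P₂`: its blocks are the restriction to the
outer two rows of the connected components of the stacked three-tier diagram. -/
def IsDiagramProduct (P₁ P₂ ν : Finpartition (univ : Finset (Fin r ⊕ Fin r))) : Prop :=
  ∀ x y, memRel ν x y ↔ stackRel P₁ P₂ (emb13 x) (emb13 y)

/-- A vertical bar: a block of the form `{i, ī}`. -/
def isVBar (Bl : Multiset (Fin k ⊕ Fin k)) : Prop :=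
  ∃ i, Bl = {Sum.inl i, Sum.inr i}

/-- A nonbasic block: one that is neither a singleton nor a vertical bar. -/
def isNonbasic (Bl : Multiset (Fin k ⊕ Fin k)) : Prop :=
  Multiset.card Bl ≠ 1 ∧ ¬ isVBar Bl

/-- `N(π̃)` : the multiset of nonbasic blocks of a multiset partition. -/
noncomputable def nbBlocks (M : Multiset (Multiset (Fin k ⊕ Fin k))) :
    Multiset (Multiset (Fin k ⊕ Fin k)) :=
  M.filter isNonbasic

/-- The nonbasic weight `nbw(π̃) = Σ_{B̃ ∈ N(π̃)} |B̃|`. -/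
noncomputable def nbw (M : Multiset (Multiset (Fin k ⊕ Fin k))) : ℕ :=
  ((nbBlocks M).map Multiset.card).sum

section Aux

variable {r k : ℕ}

/-! ### Generic closure lemma for `EqvGen` -/

lemma eqvGen_iff_of_closed {α : Type*} {R : α → α → Prop}
    (hs : ∀ z w, R z w → R w z) {C : α → Prop}
    (hcl : ∀ z w, R z w → C z → C w) :
    ∀ {z w}, Relation.EqvGen R z w → (C z ↔ C w) := by
  intro z w hzw
  induction hzw with
  | rel x y hxy => exact ⟨hcl x y hxy, hcl y x (hs x y hxy)⟩
  | refl x => exact Iff.rfl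
  | symm x y _ ih => exact ih.symm
  | trans x y z _ _ ih1 ih2 => exact ih1.trans ih2

/-! ### Basic facts about `memRel` and blocks -/

lemma memRel_refl (P : Finpartition (univ : Finset (Fin r ⊕ Fin r))) (x : Fin r ⊕ Fin r) :
    memRel P x x := by
  obtain ⟨B, hB, hx⟩ := P.exists_mem (mem_univ x)
  exact ⟨B, hB, hx, hx⟩

lemma memRel_symm {P : Finpartition (univ : Finset (Fin r ⊕ Fin r))} {x y : Fin r ⊕ Fin r}
    (h : memRel P x y) : memRel P y x := by
  obtain ⟨B, hB, hx, hy⟩ := h; exact ⟨B, hB, hy, hx⟩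

lemma memRel_trans {P : Finpartition (univ : Finset (Fin r ⊕ Fin r))} {x y z : Fin r ⊕ Fin r}
    (h1 : memRel P x y) (h2 : memRel P y z) : memRel P x z := by
  obtain ⟨B, hB, hx, hy⟩ := h1
  obtain ⟨B', hB', hy', hz⟩ := h2
  have : B = B' := P.eq_of_mem_parts hB hB' hy hy'
  exact ⟨B, hB, hx, this ▸ hz⟩

/-- The block of `P` containing `x`, as the set of elements related to `x`. -/
noncomputable def blockOf (P : Finpartition (univ : Finset (Fin r ⊕ Fin r)))
    (x : Fin r ⊕ Fin r) : Finset (Fin r ⊕ Fin r) :=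
  univ.filter (memRel P x)

lemma mem_blockOf {P : Finpartition (univ : Finset (Fin r ⊕ Fin r))} {x y : Fin r ⊕ Fin r} :
    y ∈ blockOf P x ↔ memRel P x y := by simp [blockOf]

lemma self_mem_blockOf (P : Finpartition (univ : Finset (Fin r ⊕ Fin r))) (x : Fin r ⊕ Fin r) :
    x ∈ blockOf P x := mem_blockOf.2 (memRel_refl P x)

lemma blockOf_eq_of_mem {P : Finpartition (univ : Finset (Fin r ⊕ Fin r))}
    {B : Finset (Fin r ⊕ Fin r)} {x : Fin r ⊕ Fin r}
    (hB : B ∈ P.parts) (hx : x ∈ B) : blockOf P x = B := by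
  ext y
  rw [mem_blockOf]
  constructor
  · rintro ⟨B', hB', hx', hy'⟩
    rwa [P.eq_of_mem_parts hB' hB hx' hx] at hy'
  · intro hy
    exact ⟨B, hB, hx, hy⟩

lemma blockOf_mem_parts (P : Finpartition (univ : Finset (Fin r ⊕ Fin r))) (x : Fin r ⊕ Fin r) :
    blockOf P x ∈ P.parts := by
  obtain ⟨B, hB, hx⟩ := P.exists_mem (mem_univ x)
  rwa [blockOf_eq_of_mem hB hx]

/-- The colored block of `x`. -/
noncomputable def cblock (P : Finpartition (univ : Finset (Fin r ⊕ Fin r)))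
    (f g : Fin r → Fin k) (x : Fin r ⊕ Fin r) : Multiset (Fin k ⊕ Fin k) :=
  (blockOf P x).val.map (colorOf f g)

lemma cblock_card (P : Finpartition (univ : Finset (Fin r ⊕ Fin r)))
    (f g : Fin r → Fin k) (x : Fin r ⊕ Fin r) :
    Multiset.card (cblock P f g x) = (blockOf P x).card := by
  simp [cblock]

/-! ### `nbw` as a vertex count -/

lemma nbw_eq_card (f g : Fin r → Fin k) (P : Finpartition (univ : Finset (Fin r ⊕ Fin r))) :
    nbw (coloredP f g P)
      = (univ.filter fun x => isNonbasic (cblock P f g x)).card := by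
  classical
  set S : Finset (Finset (Fin r ⊕ Fin r)) :=
    P.parts.filter (fun B => isNonbasic (B.val.map (colorOf f g))) with hS
  have h1 : nbw (coloredP f g P) = ∑ B ∈ S, B.card := by
    rw [nbw, nbBlocks, coloredP, Multiset.filter_map, Multiset.map_map]
    rw [Finset.sum, hS, Finset.filter_val]
    apply congrArg
    apply Multiset.map_congr rfl
    intro B _
    simp
  have hdisj : ∀ B ∈ S, ∀ B' ∈ S, B ≠ B' → Disjoint (id B) (id B') := by
    intro B hB B' hB' hne
    exact P.disjoint (Finset.mem_filter.mp hB).1 (Finset.mem_filter.mp hB').1 hne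
  have h2 : ∑ B ∈ S, B.card = (S.biUnion id).card := (Finset.card_biUnion hdisj).symm
  have h3 : S.biUnion id = univ.filter fun x => isNonbasic (cblock P f g x) := by
    ext x
    simp only [Finset.mem_biUnion, Finset.mem_filter, Finset.mem_univ, true_and, hS, id]
    constructor
    · rintro ⟨B, ⟨hBp, hBn⟩, hx⟩
      rw [cblock, blockOf_eq_of_mem hBp hx]
      exact hBn
    · intro hx
      exact ⟨blockOf P x, ⟨blockOf_mem_parts P x, hx⟩, self_mem_blockOf P x⟩
  rw [h1, h2, h3]


/-! ### Embedding inversions -/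

@[simp] lemma emb12_inl (t : Fin r) : (emb12 (Sum.inl t) : Fin r ⊕ (Fin r ⊕ Fin r)) = Sum.inl t := rfl
@[simp] lemma emb12_inr (t : Fin r) : (emb12 (Sum.inr t) : Fin r ⊕ (Fin r ⊕ Fin r)) = Sum.inr (Sum.inl t) := rfl
@[simp] lemma emb23_app (x : Fin r ⊕ Fin r) : (emb23 x : Fin r ⊕ (Fin r ⊕ Fin r)) = Sum.inr x := rfl
@[simp] lemma emb13_inl (t : Fin r) : (emb13 (Sum.inl t) : Fin r ⊕ (Fin r ⊕ Fin r)) = Sum.inl t := rfl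
@[simp] lemma emb13_inr (t : Fin r) : (emb13 (Sum.inr t) : Fin r ⊕ (Fin r ⊕ Fin r)) = Sum.inr (Sum.inr t) := rfl

lemma emb12_eq_inl {a : Fin r ⊕ Fin r} {t : Fin r} (h : emb12 a = Sum.inl t) : a = Sum.inl t := by
  cases a <;> simp_all

lemma emb12_eq_inrinl {a : Fin r ⊕ Fin r} {t : Fin r} (h : emb12 a = Sum.inr (Sum.inl t)) :
    a = Sum.inr t := by cases a <;> simp_all

lemma emb12_ne_inrinr {a : Fin r ⊕ Fin r} {t : Fin r} (h : emb12 a = Sum.inr (Sum.inr t)) :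
    False := by cases a <;> simp_all

lemma emb23_ne_inl {a : Fin r ⊕ Fin r} {t : Fin r} (h : emb23 a = Sum.inl t) : False := by
  simp_all

lemma emb23_eq {a x : Fin r ⊕ Fin r} (h : emb23 a = Sum.inr x) : a = x := by simp_all

/-! ### The step relation of the stack -/

def stepR (P₁ P₂ : Finpartition (univ : Finset (Fin r ⊕ Fin r)))
    (x y : Fin r ⊕ (Fin r ⊕ Fin r)) : Prop :=
  (∃ a b, emb12 a = x ∧ emb12 b = y ∧ memRel P₁ a b) ∨
  (∃ a b, emb23 a = x ∧ emb23 b = y ∧ memRel P₂ a b)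

lemma stackRel_eq (P₁ P₂ : Finpartition (univ : Finset (Fin r ⊕ Fin r))) :
    stackRel P₁ P₂ = Relation.EqvGen (stepR P₁ P₂) := rfl

lemma stepR_symm (P₁ P₂ : Finpartition (univ : Finset (Fin r ⊕ Fin r))) :
    ∀ z w, stepR P₁ P₂ z w → stepR P₁ P₂ w z := by
  rintro z w (⟨a, b, ha, hb, hm⟩ | ⟨a, b, ha, hb, hm⟩)
  · exact Or.inl ⟨b, a, hb, ha, memRel_symm hm⟩
  · exact Or.inr ⟨b, a, hb, ha, memRel_symm hm⟩

/-! ### Component lemmas, top start -/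

lemma comp1_top {P₁ P₂ : Finpartition (univ : Finset (Fin r ⊕ Fin r))} {a : Fin r}
    (h1 : ∀ z, memRel P₁ (Sum.inl a) z → z = Sum.inl a) :
    ∀ z, stackRel P₁ P₂ (Sum.inl a) z → z = Sum.inl a := by
  intro z hz
  have hz' : Relation.EqvGen (stepR P₁ P₂) (Sum.inl a) z := hz
  have hcl : ∀ u v, stepR P₁ P₂ u v → u = Sum.inl a → v = Sum.inl a := by
    rintro u v (⟨a', b', ha', hb', hm⟩ | ⟨a', b', ha', hb', hm⟩) hu
    · subst hu
      have : a' = Sum.inl a := emb12_eq_inl ha'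
      subst this
      have := h1 b' hm
      subst this
      exact hb'.symm
    · subst hu
      exact absurd ha' (fun h => emb23_ne_inl h)
  exact (eqvGen_iff_of_closed (stepR_symm P₁ P₂) hcl hz').mp rfl

lemma comp2_top {P₁ P₂ : Finpartition (univ : Finset (Fin r ⊕ Fin r))} {a b : Fin r}
    (h1 : ∀ z, memRel P₁ (Sum.inl a) z → z = Sum.inl a ∨ z = Sum.inr b)
    (h1m : memRel P₁ (Sum.inl a) (Sum.inr b))
    (h2 : ∀ z, memRel P₂ (Sum.inl b) z → z = Sum.inl b) :
    ∀ z, stackRel P₁ P₂ (Sum.inl a) z →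
      z = Sum.inl a ∨ z = Sum.inr (Sum.inl b) := by
  intro z hz
  have hz' : Relation.EqvGen (stepR P₁ P₂) (Sum.inl a) z := hz
  set C : Fin r ⊕ (Fin r ⊕ Fin r) → Prop :=
    fun u => u = Sum.inl a ∨ u = Sum.inr (Sum.inl b) with hC
  have hcl : ∀ u v, stepR P₁ P₂ u v → C u → C v := by
    rintro u v (⟨a', b', ha', hb', hm⟩ | ⟨a', b', ha', hb', hm⟩) hu
    · rcases hu with hu | hu
      · subst hu
        have : a' = Sum.inl a := emb12_eq_inl ha'
        subst this
        rcases h1 b' hm with h | h <;> subst h <;> subst hb' <;> simp [hC]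
      · subst hu
        have : a' = Sum.inr b := emb12_eq_inrinl ha'
        subst this
        have hm' : memRel P₁ (Sum.inl a) b' := memRel_trans h1m hm
        rcases h1 b' hm' with h | h <;> subst h <;> subst hb' <;> simp [hC]
    · rcases hu with hu | hu
      · subst hu; exact absurd ha' (fun h => emb23_ne_inl h)
      · subst hu
        have : a' = Sum.inl b := Sum.inr.inj ha'
        subst this
        have := h2 b' hm
        subst this
        subst hb'
        simp [hC]
  exact (eqvGen_iff_of_closed (stepR_symm P₁ P₂) hcl hz').mp (Or.inl rfl)

lemma comp3_top {P₁ P₂ : Finpartition (univ : Finset (Fin r ⊕ Fin r))} {a b c : Fin r}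
    (h1 : ∀ z, memRel P₁ (Sum.inl a) z → z = Sum.inl a ∨ z = Sum.inr b)
    (h1m : memRel P₁ (Sum.inl a) (Sum.inr b))
    (h2 : ∀ z, memRel P₂ (Sum.inl b) z → z = Sum.inl b ∨ z = Sum.inr c)
    (h2m : memRel P₂ (Sum.inl b) (Sum.inr c)) :
    ∀ z, stackRel P₁ P₂ (Sum.inl a) z →
      z = Sum.inl a ∨ z = Sum.inr (Sum.inl b) ∨ z = Sum.inr (Sum.inr c) := by
  intro z hz
  have hz' : Relation.EqvGen (stepR P₁ P₂) (Sum.inl a) z := hz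
  set C : Fin r ⊕ (Fin r ⊕ Fin r) → Prop :=
    fun u => u = Sum.inl a ∨ u = Sum.inr (Sum.inl b) ∨ u = Sum.inr (Sum.inr c) with hC
  have hcl : ∀ u v, stepR P₁ P₂ u v → C u → C v := by
    rintro u v (⟨a', b', ha', hb', hm⟩ | ⟨a', b', ha', hb', hm⟩) hu
    · rcases hu with hu | hu | hu
      · subst hu
        have : a' = Sum.inl a := emb12_eq_inl ha'
        subst this
        rcases h1 b' hm with h | h <;> subst h <;> subst hb' <;> simp [hC]
      · subst hu
        have : a' = Sum.inr b := emb12_eq_inrinl ha'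
        subst this
        have hm' : memRel P₁ (Sum.inl a) b' := memRel_trans h1m hm
        rcases h1 b' hm' with h | h <;> subst h <;> subst hb' <;> simp [hC]
      · subst hu; exact absurd ha' (fun h => emb12_ne_inrinr h)
    · rcases hu with hu | hu | hu
      · subst hu; exact absurd ha' (fun h => emb23_ne_inl h)
      · subst hu
        have : a' = Sum.inl b := Sum.inr.inj ha'
        subst this
        rcases h2 b' hm with h | h <;> subst h <;> subst hb' <;> simp [hC]
      · subst hu
        have : a' = Sum.inr c := Sum.inr.inj ha'
        subst this
        have hm' : memRel P₂ (Sum.inl b) b' := memRel_trans h2m hm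
        rcases h2 b' hm' with h | h <;> subst h <;> subst hb' <;> simp [hC]
  exact (eqvGen_iff_of_closed (stepR_symm P₁ P₂) hcl hz').mp (Or.inl rfl)


/-! ### Component lemmas, bottom start -/

lemma comp1_bot {P₁ P₂ : Finpartition (univ : Finset (Fin r ⊕ Fin r))} {c : Fin r}
    (h2 : ∀ z, memRel P₂ (Sum.inr c) z → z = Sum.inr c) :
    ∀ z, stackRel P₁ P₂ (Sum.inr (Sum.inr c)) z → z = Sum.inr (Sum.inr c) := by
  intro z hz
  have hz' : Relation.EqvGen (stepR P₁ P₂) (Sum.inr (Sum.inr c)) z := hz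
  have hcl : ∀ u v, stepR P₁ P₂ u v → u = Sum.inr (Sum.inr c) → v = Sum.inr (Sum.inr c) := by
    rintro u v (⟨a', b', ha', hb', hm⟩ | ⟨a', b', ha', hb', hm⟩) hu
    · subst hu; exact absurd ha' (fun h => emb12_ne_inrinr h)
    · subst hu
      have : a' = Sum.inr c := Sum.inr.inj ha'
      subst this
      have := h2 b' hm
      subst this
      exact hb'.symm
  exact (eqvGen_iff_of_closed (stepR_symm P₁ P₂) hcl hz').mp rfl

lemma comp2_bot {P₁ P₂ : Finpartition (univ : Finset (Fin r ⊕ Fin r))} {c d : Fin r}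
    (h2 : ∀ z, memRel P₂ (Sum.inr c) z → z = Sum.inr c ∨ z = Sum.inl d)
    (h2m : memRel P₂ (Sum.inr c) (Sum.inl d))
    (h1 : ∀ z, memRel P₁ (Sum.inr d) z → z = Sum.inr d) :
    ∀ z, stackRel P₁ P₂ (Sum.inr (Sum.inr c)) z →
      z = Sum.inr (Sum.inr c) ∨ z = Sum.inr (Sum.inl d) := by
  intro z hz
  have hz' : Relation.EqvGen (stepR P₁ P₂) (Sum.inr (Sum.inr c)) z := hz
  set C : Fin r ⊕ (Fin r ⊕ Fin r) → Prop :=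
    fun u => u = Sum.inr (Sum.inr c) ∨ u = Sum.inr (Sum.inl d) with hC
  have hcl : ∀ u v, stepR P₁ P₂ u v → C u → C v := by
    rintro u v (⟨a', b', ha', hb', hm⟩ | ⟨a', b', ha', hb', hm⟩) hu
    · rcases hu with hu | hu
      · subst hu; exact absurd ha' (fun h => emb12_ne_inrinr h)
      · subst hu
        have : a' = Sum.inr d := emb12_eq_inrinl ha'
        subst this
        have := h1 b' hm
        subst this
        subst hb'
        simp [hC]
    · rcases hu with hu | hu
      · subst hu
        have : a' = Sum.inr c := Sum.inr.inj ha'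
        subst this
        rcases h2 b' hm with h | h <;> subst h <;> subst hb' <;> simp [hC]
      · subst hu
        have : a' = Sum.inl d := Sum.inr.inj ha'
        subst this
        have hm' : memRel P₂ (Sum.inr c) b' := memRel_trans h2m hm
        rcases h2 b' hm' with h | h <;> subst h <;> subst hb' <;> simp [hC]
  exact (eqvGen_iff_of_closed (stepR_symm P₁ P₂) hcl hz').mp (Or.inl rfl)

lemma comp3_bot {P₁ P₂ : Finpartition (univ : Finset (Fin r ⊕ Fin r))} {c d e : Fin r}
    (h2 : ∀ z, memRel P₂ (Sum.inr c) z → z = Sum.inr c ∨ z = Sum.inl d)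
    (h2m : memRel P₂ (Sum.inr c) (Sum.inl d))
    (h1 : ∀ z, memRel P₁ (Sum.inr d) z → z = Sum.inr d ∨ z = Sum.inl e)
    (h1m : memRel P₁ (Sum.inr d) (Sum.inl e)) :
    ∀ z, stackRel P₁ P₂ (Sum.inr (Sum.inr c)) z →
      z = Sum.inr (Sum.inr c) ∨ z = Sum.inr (Sum.inl d) ∨ z = Sum.inl e := by
  intro z hz
  have hz' : Relation.EqvGen (stepR P₁ P₂) (Sum.inr (Sum.inr c)) z := hz
  set C : Fin r ⊕ (Fin r ⊕ Fin r) → Prop :=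
    fun u => u = Sum.inr (Sum.inr c) ∨ u = Sum.inr (Sum.inl d) ∨ u = Sum.inl e with hC
  have hcl : ∀ u v, stepR P₁ P₂ u v → C u → C v := by
    rintro u v (⟨a', b', ha', hb', hm⟩ | ⟨a', b', ha', hb', hm⟩) hu
    · rcases hu with hu | hu | hu
      · subst hu; exact absurd ha' (fun h => emb12_ne_inrinr h)
      · subst hu
        have : a' = Sum.inr d := emb12_eq_inrinl ha'
        subst this
        rcases h1 b' hm with h | h <;> subst h <;> subst hb' <;> simp [hC]
      · subst hu
        have : a' = Sum.inl e := emb12_eq_inl ha'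
        subst this
        have hm' : memRel P₁ (Sum.inr d) b' := memRel_trans h1m hm
        rcases h1 b' hm' with h | h <;> subst h <;> subst hb' <;> simp [hC]
    · rcases hu with hu | hu | hu
      · subst hu
        have : a' = Sum.inr c := Sum.inr.inj ha'
        subst this
        rcases h2 b' hm with h | h <;> subst h <;> subst hb' <;> simp [hC]
      · subst hu
        have : a' = Sum.inl d := Sum.inr.inj ha'
        subst this
        have hm' : memRel P₂ (Sum.inr c) b' := memRel_trans h2m hm
        rcases h2 b' hm' with h | h <;> subst h <;> subst hb' <;> simp [hC]
      · subst hu; exact absurd ha' (fun h => emb23_ne_inl h)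
  exact (eqvGen_iff_of_closed (stepR_symm P₁ P₂) hcl hz').mp (Or.inl rfl)


/-! ### Basic-block dichotomy and vertical-bar extraction -/

lemma not_nonbasic {Bl : Multiset (Fin k ⊕ Fin k)} (h : ¬ isNonbasic Bl) :
    Multiset.card Bl = 1 ∨ isVBar Bl := by
  rcases not_and_or.mp h with h | h
  · exact Or.inl (not_not.mp h)
  · exact Or.inr (not_not.mp h)

@[simp] lemma colorOf_inl (f g : Fin r → Fin k) (a : Fin r) :
    colorOf f g (Sum.inl a) = Sum.inl (f a) := rfl

@[simp] lemma colorOf_inr (f g : Fin r → Fin k) (b : Fin r) :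
    colorOf f g (Sum.inr b) = Sum.inr (g b) := rfl

lemma vbar_extract_top {f g : Fin r → Fin k} {B : Finset (Fin r ⊕ Fin r)} {a : Fin r}
    {i : Fin k} (hx : Sum.inl a ∈ B)
    (hB : B.val.map (colorOf f g) = {Sum.inl i, Sum.inr i}) :
    ∃ b, B.val = {Sum.inl a, Sum.inr b} ∧ f a = i ∧ g b = i := by
  obtain ⟨t, ht⟩ := Multiset.exists_cons_of_mem (Finset.mem_def.mp hx)
  rw [ht, Multiset.map_cons, colorOf_inl] at hB
  have hB' : (Sum.inl (f a) : Fin k ⊕ Fin k) ::ₘ t.map (colorOf f g)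
      = Sum.inl i ::ₘ {Sum.inr i} := hB
  rcases Multiset.cons_eq_cons.mp hB' with ⟨h1, h2⟩ | ⟨hne, cs, h1, h2⟩
  · obtain ⟨e, he, hce⟩ := Multiset.map_eq_singleton.mp h2
    cases e with
    | inl u => simp at hce
    | inr b =>
      refine ⟨b, ?_, Sum.inl.inj h1, ?_⟩
      · rw [ht, he]; rfl
      · simpa using hce
  · exfalso
    have : (Sum.inl (f a) : Fin k ⊕ Fin k) ∈ ({Sum.inr i} : Multiset (Fin k ⊕ Fin k)) := by
      rw [h2]; exact Multiset.mem_cons_self _ _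
    simp at this

lemma vbar_extract_bot {f g : Fin r → Fin k} {B : Finset (Fin r ⊕ Fin r)} {b : Fin r}
    {i : Fin k} (hx : Sum.inr b ∈ B)
    (hB : B.val.map (colorOf f g) = {Sum.inl i, Sum.inr i}) :
    ∃ a, B.val = {Sum.inr b, Sum.inl a} ∧ g b = i ∧ f a = i := by
  obtain ⟨t, ht⟩ := Multiset.exists_cons_of_mem (Finset.mem_def.mp hx)
  rw [ht, Multiset.map_cons, colorOf_inr] at hB
  have hB' : (Sum.inr (g b) : Fin k ⊕ Fin k) ::ₘ t.map (colorOf f g)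
      = Sum.inl i ::ₘ {Sum.inr i} := hB
  rcases Multiset.cons_eq_cons.mp hB' with ⟨h1, h2⟩ | ⟨hne, cs, h1, h2⟩
  · exact absurd h1 (by simp)
  · have hcs : cs = 0 := by
      have := congrArg Multiset.card h2
      simp at this
      exact this
    subst hcs
    have hgb : g b = i := by
      have : (Sum.inr i : Fin k ⊕ Fin k) = Sum.inr (g b) := by simpa using h2
      simpa using this.symm
    rw [Multiset.cons_zero] at h1
    obtain ⟨e, he, hce⟩ := Multiset.map_eq_singleton.mp h1
    cases e with
    | inr u => simp at hce
    | inl a =>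
      refine ⟨a, ?_, hgb, ?_⟩
      · rw [ht, he]; rfl
      · simpa using hce


lemma cblock_card_one {P : Finpartition (univ : Finset (Fin r ⊕ Fin r))} {f g : Fin r → Fin k}
    {x : Fin r ⊕ Fin r} (hall : ∀ z, memRel P x z → z = x) :
    Multiset.card (cblock P f g x) = 1 := by
  rw [cblock_card, Finset.card_eq_one]
  refine ⟨x, ?_⟩
  ext z
  rw [mem_blockOf, Finset.mem_singleton]
  exact ⟨fun hz => hall z hz, fun hz => hz ▸ memRel_refl P x⟩

lemma all_eq_of_cblock_card_one {P : Finpartition (univ : Finset (Fin r ⊕ Fin r))}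
    {f g : Fin r → Fin k} {x : Fin r ⊕ Fin r}
    (h : Multiset.card (cblock P f g x) = 1) : ∀ z, memRel P x z → z = x := by
  rw [cblock_card, Finset.card_eq_one] at h
  obtain ⟨u, hu⟩ := h
  have hx : x ∈ blockOf P x := self_mem_blockOf P x
  rw [hu, Finset.mem_singleton] at hx
  intro z hz
  have hz' := mem_blockOf.mpr hz
  rw [hu, Finset.mem_singleton] at hz'
  rw [hz', ← hx]

lemma mem_of_val {B : Finset (Fin r ⊕ Fin r)} {z : Fin r ⊕ Fin r}
    (h : z ∈ B.val) : z ∈ B := Finset.mem_def.mpr h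

/-! ### Key lemma: nonbasic vertices of ν come from nonbasic vertices of π₁, π₂ -/

lemma key_top (f g h' : Fin r → Fin k) (π₁ π₂ ν : Finpartition (univ : Finset (Fin r ⊕ Fin r)))
    (hprod : IsDiagramProduct π₁ π₂ ν) (a : Fin r)
    (hS : isNonbasic (cblock ν f h' (Sum.inl a))) :
    isNonbasic (cblock π₁ f g (Sum.inl a)) ∨
    ∃ b, isNonbasic (cblock π₂ g h' (Sum.inl b)) ∧ memRel π₁ (Sum.inl a) (Sum.inr b) ∧
      (∀ z, memRel π₁ (Sum.inl a) z → z = Sum.inl a ∨ z = Sum.inr b) := by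
  by_cases h₁ : isNonbasic (cblock π₁ f g (Sum.inl a))
  · exact Or.inl h₁
  right
  rcases not_nonbasic h₁ with hcard | ⟨i, hvb⟩
  · -- the π₁-block of `inl a` is a singleton: then the ν-block of `inl a` is a singleton.
    exfalso
    have hsing := all_eq_of_cblock_card_one hcard
    apply hS.1
    apply cblock_card_one
    intro z hz
    have hzz := (hprod (Sum.inl a) z).mp hz
    have hemb := comp1_top (P₂ := π₂) hsing (emb13 z) hzz
    cases z with
    | inl t => rw [emb13_inl] at hemb; exact congrArg Sum.inl (Sum.inl.inj hemb)
    | inr t => rw [emb13_inr] at hemb; exact absurd hemb (by simp)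
  · -- the π₁-block of `inl a` is a vertical bar `{inl a, inr b}`.
    obtain ⟨b, hval, hfa, hgb⟩ := vbar_extract_top (self_mem_blockOf π₁ (Sum.inl a)) hvb
    have hmem1 : memRel π₁ (Sum.inl a) (Sum.inr b) := by
      apply mem_blockOf.mp
      apply mem_of_val
      rw [hval]
      simp
    have hblk1 : ∀ z, memRel π₁ (Sum.inl a) z → z = Sum.inl a ∨ z = Sum.inr b := by
      intro z hz
      have : z ∈ (blockOf π₁ (Sum.inl a)).val := Finset.mem_def.mp (mem_blockOf.mpr hz)
      rw [hval] at this
      simpa using this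
    by_cases h₂ : isNonbasic (cblock π₂ g h' (Sum.inl b))
    · exact ⟨b, h₂, hmem1, hblk1⟩
    exfalso
    rcases not_nonbasic h₂ with hcard2 | ⟨j, hvb2⟩
    · -- the π₂-block of `inl b` is a singleton: ν-block of `inl a` is a singleton.
      have hsing2 := all_eq_of_cblock_card_one hcard2
      apply hS.1
      apply cblock_card_one
      intro z hz
      have hzz := (hprod (Sum.inl a) z).mp hz
      have hemb := comp2_top hblk1 hmem1 hsing2 (emb13 z) hzz
      cases z with
      | inl t =>
        rw [emb13_inl] at hemb
        rcases hemb with h | h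
        · exact congrArg Sum.inl (Sum.inl.inj h)
        · exact absurd h (by simp)
      | inr t =>
        rw [emb13_inr] at hemb
        rcases hemb with h | h
        · exact absurd h (by simp)
        · exact absurd h (by simp)
    · -- the π₂-block of `inl b` is a vertical bar `{inl b, inr c}`:
      -- then the ν-block of `inl a` is the vertical bar `{inl a, inr c}`.
      obtain ⟨c, hval2, hgb2, hhc⟩ := vbar_extract_top (self_mem_blockOf π₂ (Sum.inl b)) hvb2
      have hmem2 : memRel π₂ (Sum.inl b) (Sum.inr c) := by
        apply mem_blockOf.mp
        apply mem_of_val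
        rw [hval2]
        simp
      have hblk2 : ∀ z, memRel π₂ (Sum.inl b) z → z = Sum.inl b ∨ z = Sum.inr c := by
        intro z hz
        have : z ∈ (blockOf π₂ (Sum.inl b)).val := Finset.mem_def.mp (mem_blockOf.mpr hz)
        rw [hval2] at this
        simpa using this
      have hset : blockOf ν (Sum.inl a) = {Sum.inl a, Sum.inr c} := by
        ext z
        rw [mem_blockOf]
        simp only [Finset.mem_insert, Finset.mem_singleton]
        constructor
        · intro hz
          have hzz := (hprod (Sum.inl a) z).mp hz
          have hemb := comp3_top hblk1 hmem1 hblk2 hmem2 (emb13 z) hzz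
          cases z with
          | inl t =>
            rw [emb13_inl] at hemb
            rcases hemb with h | h | h
            · exact Or.inl (congrArg Sum.inl (Sum.inl.inj h))
            · exact absurd h (by simp)
            · exact absurd h (by simp)
          | inr t =>
            rw [emb13_inr] at hemb
            rcases hemb with h | h | h
            · exact absurd h (by simp)
            · exact absurd (Sum.inr.inj h) (by simp)
            · exact Or.inr (by simpa using h)
        · rintro (rfl | rfl)
          · exact memRel_refl ν _
          · apply (hprod (Sum.inl a) (Sum.inr c)).mpr
            show Relation.EqvGen (stepR π₁ π₂) (emb13 (Sum.inl a)) (emb13 (Sum.inr c))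
            rw [emb13_inl, emb13_inr]
            refine Relation.EqvGen.trans _ (Sum.inr (Sum.inl b)) _ ?_ ?_
            · exact Relation.EqvGen.rel _ _ (Or.inl ⟨Sum.inl a, Sum.inr b, rfl, rfl, hmem1⟩)
            · exact Relation.EqvGen.rel _ _ (Or.inr ⟨Sum.inl b, Sum.inr c, rfl, rfl, hmem2⟩)
      apply hS.2
      refine ⟨f a, ?_⟩
      have hcol : h' c = f a := hhc.trans (hgb2.symm.trans (hgb.trans hfa.symm))
      show (blockOf ν (Sum.inl a)).val.map (colorOf f h') = _
      rw [hset]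
      rw [Finset.insert_val_of_notMem (by simp)]
      simp [hcol]

lemma key_bot (f g h' : Fin r → Fin k) (π₁ π₂ ν : Finpartition (univ : Finset (Fin r ⊕ Fin r)))
    (hprod : IsDiagramProduct π₁ π₂ ν) (c : Fin r)
    (hS : isNonbasic (cblock ν f h' (Sum.inr c))) :
    isNonbasic (cblock π₂ g h' (Sum.inr c)) ∨
    ∃ d, isNonbasic (cblock π₁ f g (Sum.inr d)) ∧ memRel π₂ (Sum.inr c) (Sum.inl d) ∧
      (∀ z, memRel π₂ (Sum.inr c) z → z = Sum.inr c ∨ z = Sum.inl d) := by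
  by_cases h₂ : isNonbasic (cblock π₂ g h' (Sum.inr c))
  · exact Or.inl h₂
  right
  rcases not_nonbasic h₂ with hcard | ⟨i, hvb⟩
  · exfalso
    have hsing := all_eq_of_cblock_card_one hcard
    apply hS.1
    apply cblock_card_one
    intro z hz
    have hzz := (hprod (Sum.inr c) z).mp hz
    have hemb := comp1_bot (P₁ := π₁) hsing (emb13 z) hzz
    cases z with
    | inl t => rw [emb13_inl] at hemb; exact absurd hemb (by simp)
    | inr t =>
      rw [emb13_inr] at hemb
      simpa using hemb
  · obtain ⟨d, hval, hhc, hgd⟩ := vbar_extract_bot (self_mem_blockOf π₂ (Sum.inr c)) hvb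
    have hmem2 : memRel π₂ (Sum.inr c) (Sum.inl d) := by
      apply mem_blockOf.mp
      apply mem_of_val
      rw [hval]
      simp
    have hblk2 : ∀ z, memRel π₂ (Sum.inr c) z → z = Sum.inr c ∨ z = Sum.inl d := by
      intro z hz
      have : z ∈ (blockOf π₂ (Sum.inr c)).val := Finset.mem_def.mp (mem_blockOf.mpr hz)
      rw [hval] at this
      simpa using this
    by_cases h₁ : isNonbasic (cblock π₁ f g (Sum.inr d))
    · exact ⟨d, h₁, hmem2, hblk2⟩
    exfalso
    rcases not_nonbasic h₁ with hcard1 | ⟨j, hvb1⟩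
    · have hsing1 := all_eq_of_cblock_card_one hcard1
      apply hS.1
      apply cblock_card_one
      intro z hz
      have hzz := (hprod (Sum.inr c) z).mp hz
      have hemb := comp2_bot hblk2 hmem2 hsing1 (emb13 z) hzz
      cases z with
      | inl t =>
        rw [emb13_inl] at hemb
        rcases hemb with h | h
        · exact absurd h (by simp)
        · exact absurd h (by simp)
      | inr t =>
        rw [emb13_inr] at hemb
        rcases hemb with h | h
        · simpa using h
        · exact absurd (Sum.inr.inj h) (by simp)
    · obtain ⟨e, hval1, hgd1, hfe⟩ := vbar_extract_bot (self_mem_blockOf π₁ (Sum.inr d)) hvb1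
      have hmem1 : memRel π₁ (Sum.inr d) (Sum.inl e) := by
        apply mem_blockOf.mp
        apply mem_of_val
        rw [hval1]
        simp
      have hblk1 : ∀ z, memRel π₁ (Sum.inr d) z → z = Sum.inr d ∨ z = Sum.inl e := by
        intro z hz
        have : z ∈ (blockOf π₁ (Sum.inr d)).val := Finset.mem_def.mp (mem_blockOf.mpr hz)
        rw [hval1] at this
        simpa using this
      have hset : blockOf ν (Sum.inr c) = {Sum.inl e, Sum.inr c} := by
        ext z
        rw [mem_blockOf]
        simp only [Finset.mem_insert, Finset.mem_singleton]
        constructor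
        · intro hz
          have hzz := (hprod (Sum.inr c) z).mp hz
          have hemb := comp3_bot hblk2 hmem2 hblk1 hmem1 (emb13 z) hzz
          cases z with
          | inl t =>
            rw [emb13_inl] at hemb
            rcases hemb with h | h | h
            · exact absurd h (by simp)
            · exact absurd h (by simp)
            · exact Or.inl (congrArg Sum.inl (Sum.inl.inj h))
          | inr t =>
            rw [emb13_inr] at hemb
            rcases hemb with h | h | h
            · exact Or.inr (by simpa using h)
            · exact absurd (Sum.inr.inj h) (by simp)
            · exact absurd h (by simp)
        · rintro (rfl | rfl)
          · apply (hprod (Sum.inr c) (Sum.inl e)).mpr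
            show Relation.EqvGen (stepR π₁ π₂) (emb13 (Sum.inr c)) (emb13 (Sum.inl e))
            rw [emb13_inl, emb13_inr]
            refine Relation.EqvGen.trans _ (Sum.inr (Sum.inl d)) _ ?_ ?_
            · exact Relation.EqvGen.rel _ _ (Or.inr ⟨Sum.inr c, Sum.inl d, rfl, rfl, hmem2⟩)
            · exact Relation.EqvGen.rel _ _ (Or.inl ⟨Sum.inr d, Sum.inl e, rfl, rfl, hmem1⟩)
          · exact memRel_refl ν _
      apply hS.2
      refine ⟨f e, ?_⟩
      have hcol : h' c = f e := hhc.trans (hgd.symm.trans (hgd1.trans hfe.symm))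
      show (blockOf ν (Sum.inr c)).val.map (colorOf f h') = _
      rw [hset]
      rw [Finset.insert_val_of_notMem (by simp)]
      simp [hcol]


/-! ### The injection data -/

def Link (π₁ π₂ : Finpartition (univ : Finset (Fin r ⊕ Fin r))) (x : Fin r ⊕ Fin r)
    (y : (Fin r ⊕ Fin r) ⊕ (Fin r ⊕ Fin r)) : Prop :=
  ((∃ a, x = Sum.inl a) ∧ y = Sum.inl x) ∨
  ((∃ c, x = Sum.inr c) ∧ y = Sum.inr x) ∨
  (∃ a b, x = Sum.inl a ∧ y = Sum.inr (Sum.inl b) ∧ memRel π₁ x (Sum.inr b) ∧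
    (∀ z, memRel π₁ x z → z = x ∨ z = Sum.inr b)) ∨
  (∃ c d, x = Sum.inr c ∧ y = Sum.inl (Sum.inr d) ∧ memRel π₂ x (Sum.inl d) ∧
    (∀ z, memRel π₂ x z → z = x ∨ z = Sum.inl d))

lemma link_inj {π₁ π₂ : Finpartition (univ : Finset (Fin r ⊕ Fin r))}
    {x x' : Fin r ⊕ Fin r} {y : (Fin r ⊕ Fin r) ⊕ (Fin r ⊕ Fin r)}
    (h : Link π₁ π₂ x y) (h' : Link π₁ π₂ x' y) : x = x' := by
  rcases h with ⟨⟨a, hxa⟩, rfl⟩ | ⟨⟨c, hxc⟩, rfl⟩ | ⟨a, b, hxa, rfl, hm, hb⟩ |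
    ⟨c, d, hxc, rfl, hm, hb⟩
  · rcases h' with ⟨⟨a', hxa'⟩, hy'⟩ | ⟨⟨c', hxc'⟩, hy'⟩ | ⟨a', b', hxa', hy', hm', hb'⟩ |
      ⟨c', d', hxc', hy', hm', hb'⟩
    · exact Sum.inl.inj hy'
    · simp at hy'
    · simp at hy'
    · rw [hxa] at hy'; simp at hy'
  · rcases h' with ⟨⟨a', hxa'⟩, hy'⟩ | ⟨⟨c', hxc'⟩, hy'⟩ | ⟨a', b', hxa', hy', hm', hb'⟩ |
      ⟨c', d', hxc', hy', hm', hb'⟩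
    · simp at hy'
    · exact Sum.inr.inj hy'
    · rw [hxc] at hy'; simp at hy'
    · simp at hy'
  · rcases h' with ⟨⟨a', hxa'⟩, hy'⟩ | ⟨⟨c', hxc'⟩, hy'⟩ | ⟨a', b', hxa', hy', hm', hb'⟩ |
      ⟨c', d', hxc', hy', hm', hb'⟩
    · simp at hy'
    · rw [hxc'] at hy'; simp at hy'
    · have hbb : b = b' := Sum.inl.inj (Sum.inr.inj hy')
      have hm'' : memRel π₁ x' (Sum.inr b) := by rw [hbb]; exact hm'
      have hxx : memRel π₁ x x' := memRel_trans hm (memRel_symm hm'')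
      rcases hb x' hxx with hh | hh
      · exact hh.symm
      · rw [hxa'] at hh; simp at hh
    · simp at hy'
  · rcases h' with ⟨⟨a', hxa'⟩, hy'⟩ | ⟨⟨c', hxc'⟩, hy'⟩ | ⟨a', b', hxa', hy', hm', hb'⟩ |
      ⟨c', d', hxc', hy', hm', hb'⟩
    · rw [hxa'] at hy'; simp at hy'
    · simp at hy'
    · simp at hy'
    · have hdd : d = d' := Sum.inr.inj (Sum.inl.inj hy')
      have hm'' : memRel π₂ x' (Sum.inl d) := by rw [hdd]; exact hm'
      have hxx : memRel π₂ x x' := memRel_trans hm (memRel_symm hm'')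
      rcases hb x' hxx with hh | hh
      · exact hh.symm
      · rw [hxc'] at hh; simp at hh

end Aux


/-- If the diagram-like basis element `D_ν̃` appears with nonzero
coefficient in the product `D_{π̃₁} D_{π̃₂}` in `MP_{r,k}(n)` — equivalently, if there is
a snapshot: set partitions `π₁, π₂` coloring to `π̃₁, π̃₂` (sharing the middle coloring
`g`) whose diagram product `ν` colors to `ν̃` — then
`nbw(ν̃) ≤ nbw(π̃₁) + nbw(π̃₂)`. -/
theorem stmt12 (f g h : Fin r → Fin k) (hf : Monotone f) (hg : Monotone g)
    (hh : Monotone h)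
    (π₁ π₂ ν : Finpartition (univ : Finset (Fin r ⊕ Fin r)))
    (hprod : IsDiagramProduct π₁ π₂ ν) :
    nbw (coloredP f h ν) ≤ nbw (coloredP f g π₁) + nbw (coloredP g h π₂) := by
  classical
  rw [nbw_eq_card f h ν, nbw_eq_card f g π₁, nbw_eq_card g h π₂]
  set T₁ : Finset (Fin r ⊕ Fin r) :=
    univ.filter (fun x => isNonbasic (cblock π₁ f g x)) with hT₁
  set T₂ : Finset (Fin r ⊕ Fin r) :=
    univ.filter (fun x => isNonbasic (cblock π₂ g h x)) with hT₂
  set S : Finset (Fin r ⊕ Fin r) :=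
    univ.filter (fun x => isNonbasic (cblock ν f h x)) with hSdef
  rw [← Finset.card_disjSum]
  have key : ∀ x ∈ S, ∃ y : (Fin r ⊕ Fin r) ⊕ (Fin r ⊕ Fin r),
      y ∈ T₁.disjSum T₂ ∧ Link π₁ π₂ x y := by
    intro x hx
    have hx' : isNonbasic (cblock ν f h x) := (Finset.mem_filter.mp hx).2
    cases x with
    | inl a =>
      rcases key_top f g h π₁ π₂ ν hprod a hx' with h1 | ⟨b, h2, hm, hb⟩
      · exact ⟨Sum.inl (Sum.inl a),
          Finset.inl_mem_disjSum.mpr (Finset.mem_filter.mpr ⟨mem_univ _, h1⟩),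
          Or.inl ⟨⟨a, rfl⟩, rfl⟩⟩
      · exact ⟨Sum.inr (Sum.inl b),
          Finset.inr_mem_disjSum.mpr (Finset.mem_filter.mpr ⟨mem_univ _, h2⟩),
          Or.inr (Or.inr (Or.inl ⟨a, b, rfl, rfl, hm, hb⟩))⟩
    | inr c =>
      rcases key_bot f g h π₁ π₂ ν hprod c hx' with h2 | ⟨d, h1, hm, hb⟩
      · exact ⟨Sum.inr (Sum.inr c),
          Finset.inr_mem_disjSum.mpr (Finset.mem_filter.mpr ⟨mem_univ _, h2⟩),
          Or.inr (Or.inl ⟨⟨c, rfl⟩, rfl⟩)⟩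
      · exact ⟨Sum.inl (Sum.inr d),
          Finset.inl_mem_disjSum.mpr (Finset.mem_filter.mpr ⟨mem_univ _, h1⟩),
          Or.inr (Or.inr (Or.inr ⟨c, d, rfl, rfl, hm, hb⟩))⟩
  choose φ hφ using key
  refine Finset.card_le_card_of_injOn
    (fun x => if hx : x ∈ S then φ x hx else Sum.inl x) ?_ ?_
  · intro x hx
    simp only
    rw [dif_pos (Finset.mem_coe.mp hx)]
    exact (hφ x hx).1
  · intro x hx x' hx' heq
    simp only [Finset.mem_coe] at hx hx'
    simp only at heq
    rw [dif_pos hx, dif_pos hx'] at heq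
    exact link_inj (hφ x hx).2 (heq ▸ (hφ x' hx').2)
end

section
/- Let ρ be a set partition of [r] and a a weak composition of r such that the stabilizer S_a^ρ = {σ ∈ S_a : σ·ρ = ρ} is defined. Then S_a^ρ factors as a product S_a^ρ = X_a^ρ Y_a^ρ, where Y_a^ρ is the normal subgroup of permutations that fix each block of ρ setwise (permuting only within blocks) and X_a^ρ is a subgroup permuting whole blocks, and X_a^ρ ∩ Y_a^ρ = {1}; in particular |S_a^ρ| = |X_a^ρ| · |Y_a^ρ|. -/
/-!
An element `σ` of the stabilizer maps each block `B` of `ρ` onto a block `σ B`. Replacing `σ` on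
every block by the increasing bijection `B → σ B` gives an element `x` of `X_a^ρ`: as `c` is
monotone and `σ` preserves colours, the sorted colour sequences of `B` and `σ B` coincide, so `x`
preserves colours as well. Then `y = x⁻¹ σ` fixes every block and `σ = x y`. An element of `X_a^ρ`
is determined by the images of the blocks, which right multiplication by `Y_a^ρ` does not change;
hence the factorization is unique, which gives `X_a^ρ ∩ Y_a^ρ = 1` and the cardinality formula.
-/

open Finset

variable {r k : ℕ}

/-- The stabilizer `S_a^ρ = {σ ∈ S_a : σ·ρ = ρ}` of a set partition `ρ` of `[r]` inside
the Young subgroup `S_a` (the stabilizer of the coloring map `c`), acting by relabeling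
elements. -/
def stab (c : Fin r → Fin k) (P : Finpartition (univ : Finset (Fin r))) :
    Set (Equiv.Perm (Fin r)) :=
  {σ | c ∘ ⇑σ = c ∧ P.parts.image (fun B => B.image ⇑σ) = P.parts}

/-- `Y_a^ρ` : the elements of the stabilizer fixing every block of `ρ` setwise
(permuting only within blocks). -/
def yGrp (c : Fin r → Fin k) (P : Finpartition (univ : Finset (Fin r))) :
    Set (Equiv.Perm (Fin r)) :=
  {σ ∈ stab c P | ∀ B ∈ P.parts, B.image ⇑σ = B}

/-- `X_a^ρ` : the elements of the stabilizer mapping each block of `ρ` onto a block of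
`ρ` by an order-preserving bijection (permuting whole blocks). -/
def xGrp (c : Fin r → Fin k) (P : Finpartition (univ : Finset (Fin r))) :
    Set (Equiv.Perm (Fin r)) :=
  {σ ∈ stab c P | ∀ B ∈ P.parts, MonotoneOn ⇑σ ↑B}

theorem StrictMonoOn.eqOn_of_image_eq {α β : Type*} [LinearOrder α] [Preorder β]
    {f g : α → β} {s : Finset α} (hf : StrictMonoOn f s) (hg : StrictMonoOn g s)
    (h : f '' s = g '' s) : Set.EqOn f g s := by
  have hF : StrictMono (f ∘ ((↑) : s → α)) := fun a b hab => hf a.2 b.2 hab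
  have hG : StrictMono (g ∘ ((↑) : s → α)) := fun a b hab => hg a.2 b.2 hab
  have := (hF.range_inj hG).1 (by rw [Set.range_comp, Set.range_comp]; simpa using h)
  exact fun i hi => congrFun this ⟨i, hi⟩

theorem Monotone.comp_orderEmbOfFin_eq {α β : Type*} [LinearOrder α] [PartialOrder β]
    {c : α → β} (hc : Monotone c) {s t : Finset α} (h : s.val.map c = t.val.map c) {n : ℕ}
    (hs : s.card = n) (ht : t.card = n) :
    c ∘ s.orderEmbOfFin hs = c ∘ t.orderEmbOfFin ht := by
  have hsort : s.sort.map c = t.sort.map c := by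
    have hperm : (s.sort.map c).Perm (t.sort.map c) := by
      rw [← Multiset.coe_eq_coe, ← Multiset.map_coe, ← Multiset.map_coe, sort_eq, sort_eq, h]
    exact hperm.eq_of_pairwise' ((s.pairwise_sort _).map c fun _ _ hab => hc hab)
      ((t.pairwise_sort _).map c fun _ _ hab => hc hab)
  funext i
  have := List.getElem_of_eq hsort (i := i) (by simp [hs])
  rw [List.getElem_map, List.getElem_map] at this
  exact this

namespace Finset

variable {α β : Type*} [LinearOrder α]

noncomputable def orderIsoOfCardEq (s t : Finset α) (h : s.card = t.card) : s ≃o t :=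
  (s.orderIsoOfFin h).symm.trans (t.orderIsoOfFin rfl)

theorem _root_.Monotone.apply_orderIsoOfCardEq [PartialOrder β] {c : α → β} (hc : Monotone c)
    {s t : Finset α} (h : s.card = t.card) (hst : s.val.map c = t.val.map c) (i : s) :
    c (s.orderIsoOfCardEq t h i) = c i := by
  have := congrFun (hc.comp_orderEmbOfFin_eq hst h rfl) ((s.orderIsoOfFin h).symm i)
  simpa [orderIsoOfCardEq, ← coe_orderIsoOfFin_apply] using this.symm

end Finset

namespace Finpartition

open Equiv

variable {α β : Type*} [Fintype α] [LinearOrder α] [DecidableEq α]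
  (P : Finpartition (univ : Finset α)) (σ : Perm α)

noncomputable def monotoneRearrangement (i : α) : α :=
  (P.part i).orderIsoOfCardEq ((P.part i).image σ) (card_image_of_injective _ σ.injective).symm
    ⟨i, P.mem_part (mem_univ i)⟩

variable {P} {B : Finset α}

theorem monotoneRearrangement_eq (hB : B ∈ P.parts) {i : α} (hi : i ∈ B) :
    P.monotoneRearrangement σ i =
      B.orderIsoOfCardEq (B.image σ) (card_image_of_injective _ σ.injective).symm ⟨i, hi⟩ := by
  obtain rfl := P.part_eq_of_mem hB hi
  rfl

theorem monotoneRearrangement_mem (hB : B ∈ P.parts) {i : α} (hi : i ∈ B) :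
    P.monotoneRearrangement σ i ∈ B.image σ := by
  rw [monotoneRearrangement_eq σ hB hi]
  exact Subtype.prop _

theorem strictMonoOn_monotoneRearrangement (hB : B ∈ P.parts) :
    StrictMonoOn (P.monotoneRearrangement σ) B := by
  intro i hi j hj hij
  rw [monotoneRearrangement_eq σ hB hi, monotoneRearrangement_eq σ hB hj]
  exact (B.orderIsoOfCardEq _ _).strictMono (show (⟨i, hi⟩ : B) < ⟨j, hj⟩ from hij)

theorem image_monotoneRearrangement (hB : B ∈ P.parts) :
    B.image (P.monotoneRearrangement σ) = B.image σ :=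
  eq_of_subset_of_card_le
    (fun _ hx => by
      obtain ⟨i, hi, rfl⟩ := mem_image.1 hx
      exact monotoneRearrangement_mem σ hB hi)
    (by rw [card_image_of_injective _ σ.injective,
      card_image_of_injOn (strictMonoOn_monotoneRearrangement σ hB).injOn])

theorem injective_monotoneRearrangement (hσ : ∀ B ∈ P.parts, B.image σ ∈ P.parts) :
    Function.Injective (P.monotoneRearrangement σ) := by
  intro i j hij
  have hPi := P.part_mem.2 (mem_univ i)
  have hPj := P.part_mem.2 (mem_univ j)
  have hi := P.mem_part (mem_univ i)
  have hj := P.mem_part (mem_univ j)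
  -- the blocks `σ (P.part i)` and `σ (P.part j)` share the common value, so they coincide
  have hpart : P.part i = P.part j := image_injective σ.injective <|
    P.eq_of_mem_parts (hσ _ hPi) (hσ _ hPj) (monotoneRearrangement_mem σ hPi hi)
      (hij ▸ monotoneRearrangement_mem σ hPj hj)
  exact (strictMonoOn_monotoneRearrangement σ hPi).injOn hi (hpart ▸ hj) hij

theorem apply_monotoneRearrangement [PartialOrder β] {c : α → β} (hc : Monotone c)
    (hcσ : c ∘ σ = c) (i : α) : c (P.monotoneRearrangement σ i) = c i :=
  hc.apply_orderIsoOfCardEq _ (by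
    rw [image_val_of_injOn σ.injective.injOn, Multiset.map_map, hcσ]) _

noncomputable def monotoneRearrangementPerm (hσ : ∀ B ∈ P.parts, B.image σ ∈ P.parts) : Perm α :=
  ofBijective _ (Finite.injective_iff_bijective.1 (injective_monotoneRearrangement σ hσ))

end Finpartition

open Equiv Pointwise

def youngSubgroup {α β : Type*} (c : α → β) : Subgroup (Perm α) where
  carrier := {σ | c ∘ σ = c}
  mul_mem' {σ τ} (hσ : c ∘ σ = c) (hτ : c ∘ τ = c) := by
    change c ∘ σ ∘ τ = c
    rw [← Function.comp_assoc, hσ, hτ]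
  one_mem' := rfl
  inv_mem' {σ} (hσ : c ∘ σ = c) := by
    calc c ∘ ⇑σ⁻¹ = (c ∘ σ) ∘ ⇑σ⁻¹ := by rw [hσ]
      _ = c := by ext; simp

/-- Its carrier is definitionally `stab c P`, since `σ • P.parts = P.parts.image (σ • ·)`. -/
def stabSubgroup (c : Fin r → Fin k) (P : Finpartition (univ : Finset (Fin r))) :
    Subgroup (Perm (Fin r)) :=
  youngSubgroup c ⊓ MulAction.stabilizer (Perm (Fin r)) P.parts

section Factorization

variable {c : Fin r → Fin k} {P : Finpartition (univ : Finset (Fin r))}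
  {σ x x' y : Perm (Fin r)} {B : Finset (Fin r)}

theorem image_mem_parts (hσ : σ ∈ stab c P) (hB : B ∈ P.parts) : B.image σ ∈ P.parts :=
  hσ.2 ▸ smul_mem_smul_finset (a := σ) hB

theorem image_mul_of_mem_yGrp (hy : y ∈ yGrp c P) (hB : B ∈ P.parts) :
    B.image ⇑(x * y) = B.image x := by
  rw [Perm.coe_mul, ← image_image, hy.2 B hB]

theorem mul_mem_stab (hx : x ∈ xGrp c P) (hy : y ∈ yGrp c P) : x * y ∈ stab c P :=
  (stabSubgroup c P).mul_mem hx.1 hy.1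

theorem one_mem_xGrp : 1 ∈ xGrp c P :=
  ⟨(stabSubgroup c P).one_mem, fun _ _ => monotoneOn_id⟩

theorem one_mem_yGrp : 1 ∈ yGrp c P :=
  ⟨(stabSubgroup c P).one_mem, fun _ _ => by simp⟩

theorem eq_of_mem_xGrp_of_image_eq (hx : x ∈ xGrp c P) (hx' : x' ∈ xGrp c P)
    (h : ∀ B ∈ P.parts, B.image x = B.image x') : x = x' := by
  refine Equiv.ext fun i => ?_
  have hB := P.part_mem.2 (mem_univ i)
  exact StrictMonoOn.eqOn_of_image_eq ((hx.2 _ hB).strictMonoOn_of_injOn x.injective.injOn)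
    ((hx'.2 _ hB).strictMonoOn_of_injOn x'.injective.injOn)
    (by rw [← coe_image, ← coe_image, h _ hB]) (P.mem_part (mem_univ i))

theorem xGrp_inter_yGrp : xGrp c P ∩ yGrp c P = {1} := by
  ext σ
  refine ⟨fun ⟨hx, hy⟩ => ?_, by rintro rfl; exact ⟨one_mem_xGrp, one_mem_yGrp⟩⟩
  exact eq_of_mem_xGrp_of_image_eq hx one_mem_xGrp fun B hB => by simp [hy.2 B hB]

theorem conj_mem_yGrp (hσ : σ ∈ stab c P) (hy : y ∈ yGrp c P) : σ * y * σ⁻¹ ∈ yGrp c P := by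
  have hσ' : σ⁻¹ ∈ stab c P := (stabSubgroup c P).inv_mem hσ
  refine ⟨(stabSubgroup c P).mul_mem ((stabSubgroup c P).mul_mem hσ hy.1) hσ', fun B hB => ?_⟩
  change (σ * y * σ⁻¹) • B = B
  rw [mul_smul, mul_smul, show y • σ⁻¹ • B = σ⁻¹ • B from hy.2 _ (image_mem_parts hσ' hB),
    smul_inv_smul]

theorem exists_mem_xGrp_mem_yGrp (hc : Monotone c) (hσ : σ ∈ stab c P) :
    ∃ x ∈ xGrp c P, ∃ y ∈ yGrp c P, σ = x * y := by
  set x := Finpartition.monotoneRearrangementPerm σ fun _ => image_mem_parts hσ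
  have hx_image : ∀ B ∈ P.parts, B.image x = B.image σ :=
    fun B hB => P.image_monotoneRearrangement σ hB
  have hx : x ∈ stab c P :=
    ⟨funext (P.apply_monotoneRearrangement σ hc hσ.1), (image_congr hx_image).trans hσ.2⟩
  refine ⟨x, ⟨hx, fun B hB => (P.strictMonoOn_monotoneRearrangement σ hB).monotoneOn⟩,
    x⁻¹ * σ, ⟨(stabSubgroup c P).mul_mem ((stabSubgroup c P).inv_mem hx) hσ, fun B hB => ?_⟩,
    (mul_inv_cancel_left x σ).symm⟩
  change (x⁻¹ * σ) • B = B
  rw [mul_smul, show σ • B = x • B from (hx_image B hB).symm, inv_smul_smul]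

theorem bijective_mul_xGrp_yGrp (hc : Monotone c) :
    Function.Bijective fun p : xGrp c P × yGrp c P =>
      (⟨p.1 * p.2, mul_mem_stab p.1.2 p.2.2⟩ : stab c P) := by
  refine ⟨fun ⟨⟨x, hx⟩, ⟨y, hy⟩⟩ ⟨⟨x', hx'⟩, ⟨y', hy'⟩⟩ h => ?_, fun ⟨σ, hσ⟩ => ?_⟩
  · have hxy : x * y = x' * y' := congrArg Subtype.val h
    obtain rfl : x = x' := eq_of_mem_xGrp_of_image_eq hx hx' fun B hB => by
      rw [← image_mul_of_mem_yGrp (x := x) hy hB, ← image_mul_of_mem_yGrp (x := x') hy' hB, hxy]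
    obtain rfl : y = y' := mul_left_cancel hxy
    rfl
  · obtain ⟨x, hx, y, hy, rfl⟩ := exists_mem_xGrp_mem_yGrp hc hσ
    exact ⟨⟨⟨x, hx⟩, ⟨y, hy⟩⟩, rfl⟩

end Factorization

/-- The stabilizer `S_a^ρ` factors as the product
`S_a^ρ = X_a^ρ Y_a^ρ`, where `Y_a^ρ` is a normal subgroup of `S_a^ρ` (permuting only
within blocks) and `X_a^ρ` permutes whole blocks; moreover `X_a^ρ ∩ Y_a^ρ = {1}` and in
particular `|S_a^ρ| = |X_a^ρ| · |Y_a^ρ|`. -/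
theorem stmt16 (c : Fin r → Fin k) (hc : Monotone c)
    (P : Finpartition (univ : Finset (Fin r))) :
    (∀ σ, σ ∈ stab c P ↔ ∃ x ∈ xGrp c P, ∃ y ∈ yGrp c P, σ = x * y) ∧
    (xGrp c P ∩ yGrp c P = {1}) ∧
    (∀ σ ∈ stab c P, ∀ y ∈ yGrp c P, σ * y * σ⁻¹ ∈ yGrp c P) ∧
    Nat.card (stab c P) = Nat.card (xGrp c P) * Nat.card (yGrp c P) := by
  refine ⟨fun σ => ⟨exists_mem_xGrp_mem_yGrp hc, ?_⟩, xGrp_inter_yGrp,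
    fun σ hσ y hy => conj_mem_yGrp hσ hy, ?_⟩
  · rintro ⟨x, hx, y, hy, rfl⟩
    exact mul_mem_stab hx hy
  · rw [← Nat.card_prod]
    exact (Nat.card_eq_of_bijective _ (bijective_mul_xGrp_yGrp hc)).symm
end

section
/- Let G be a finite group acting on a finite set X, let H ≤ G, and let κ : X → Y be an H-invariant surjection such that κ(x) = κ(x') implies x and x' lie in the same H-orbit. Then κ induces a bijection between the orbit set X/H and Y. In particular, for the action of the Young subgroup S_a on the set SPT_{λ,r} of set partition tableaux of shape λ (by relabeling entries), the coloring map κ_a induces a bijection ⨄_{a ∈ W_{r,k}} SPT_{λ,r}/S_a ≅ MPT_{λ,r,k}. -/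
/-!
The hypotheses on `κ` say precisely that the orbit relation of `H` is the kernel of `κ`, so `κ`
descends to a bijection from the orbit space onto `Z`.

A weak composition `a` of `r` with `k` parts is encoded by the monotone coloring
`f : Fin r → Fin k` taking the value `i` exactly `aᵢ` times, so that `colorStab f` is `S_a`.
For fixed `f`, record a tableau `T` by the map sending each entry to its cell. If `T` and `S`
have the same coloring, the multisets of pairs (cell, color) of their entries agree, so some
color-preserving permutation carries the cells of `S` to those of `T`: an element of `S_a`
moving `T` to `S`. Every multiset partition tableau of content `a` is the coloring of a
tableau, obtained by splitting `[r]` cell by cell along `f`. Finally a monotone coloring is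
determined by its content, so the images of the different `κ_a` partition the multiset
partition tableaux.
-/

open Finset
open scoped Classical

/-- The Young subgroup associated to a coloring map `c` : the subgroup of permutations
preserving `c`. -/
def colorStab {α β : Type*} (c : α → β) : Subgroup (Equiv.Perm α) where
  carrier := {σ | ∀ x, c (σ x) = c x}
  one_mem' := fun _ => rfl
  mul_mem' := by
    intro σ τ hσ hτ x
    rw [Equiv.Perm.mul_apply, hσ, hτ]
  inv_mem' := by
    intro σ hσ x
    simpa using (hσ (σ⁻¹ x)).symm

/-- A set partition tableau of shape the Young diagram `Y` with content a set partition
of `[r]` : a filling of the cells of `Y` by disjoint subsets of `[r]` whose union is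
`[r]`, where only cells in the first row may be empty. -/
def IsSPT (Y : YoungDiagram) (r : ℕ) (T : ℕ × ℕ → Finset (Fin r)) : Prop :=
  (∀ c, c ∉ Y.cells → T c = ∅) ∧
  (∀ c ∈ Y.cells, 1 ≤ c.1 → T c ≠ ∅) ∧
  (∀ c ∈ Y.cells, ∀ c' ∈ Y.cells, c ≠ c' → Disjoint (T c) (T c')) ∧
  (Y.cells.biUnion T = univ)

/-- The set partition tableaux `SPT_{λ,r}`. -/
def SPT (Y : YoungDiagram) (r : ℕ) : Type :=
  {T : ℕ × ℕ → Finset (Fin r) // IsSPT Y r T}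

/-- A multiset partition tableau of shape `Y` with content a multiset partition from
`[k]` with `r` total numbers. -/
def IsMPT (Y : YoungDiagram) (r k : ℕ) (M : ℕ × ℕ → Multiset (Fin k)) : Prop :=
  (∀ c, c ∉ Y.cells → M c = 0) ∧
  (∀ c ∈ Y.cells, 1 ≤ c.1 → M c ≠ 0) ∧
  Multiset.card (Y.cells.sum M) = r

/-- Permutations act on set partition tableaux by relabeling the entries. -/
instance {Y : YoungDiagram} {r : ℕ} : MulAction (Equiv.Perm (Fin r)) (SPT Y r) where
  smul σ T := ⟨fun c => (T.val c).image σ, by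
    obtain ⟨h1, h2, h3, h4⟩ := T.prop
    refine ⟨?_, ?_, ?_, ?_⟩
    · intro c hc
      show (T.val c).image ⇑σ = ∅
      rw [h1 c hc]; simp
    · intro c hc hr
      show (T.val c).image ⇑σ ≠ ∅
      simpa [Finset.image_eq_empty] using h2 c hc hr
    · intro c hc c' hc' hne
      show Disjoint ((T.val c).image ⇑σ) ((T.val c').image ⇑σ)
      rw [Finset.disjoint_image σ.injective]
      exact h3 c hc c' hc' hne
    · show Y.cells.biUnion (fun c => (T.val c).image ⇑σ) = univ
      ext x
      simp only [Finset.mem_biUnion, Finset.mem_univ, iff_true]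
      have hx : σ⁻¹ x ∈ Y.cells.biUnion T.val := by
        rw [h4]; exact Finset.mem_univ _
      obtain ⟨c, hc, hxc⟩ := Finset.mem_biUnion.mp hx
      exact ⟨c, hc, Finset.mem_image.mpr ⟨σ⁻¹ x, hxc, by simp⟩⟩⟩
  one_smul T := by
    apply Subtype.ext
    funext c
    show (T.val c).image ⇑(1 : Equiv.Perm (Fin r)) = T.val c
    simp
  mul_smul σ τ T := by
    apply Subtype.ext
    funext c
    show (T.val c).image ⇑(σ * τ) = ((T.val c).image ⇑τ).image ⇑σ
    rw [Finset.image_image]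
    rfl

open MulAction

section OrbitQuotient

variable {H X Z : Type*} [Group H] [MulAction H X] {κ : X → Z}

theorem orbitRel_iff_eq_of_fiber_subset_orbit (hinv : ∀ (h : H) (x : X), κ (h • x) = κ x)
    (hfib : ∀ x x', κ x = κ x' → x' ∈ orbit H x) (x x' : X) :
    orbitRel H X x x' ↔ κ x = κ x' := by
  rw [orbitRel_apply]
  constructor
  · rintro ⟨h, rfl⟩
    exact hinv h x'
  · exact fun h => hfib x' x h.symm

noncomputable def orbitQuotientEquivOfFibers (hsurj : Function.Surjective κ)
    (hinv : ∀ (h : H) (x : X), κ (h • x) = κ x)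
    (hfib : ∀ x x', κ x = κ x' → x' ∈ orbit H x) :
    Quotient (orbitRel H X) ≃ Z :=
  (Quotient.congrRight (orbitRel_iff_eq_of_fiber_subset_orbit hinv hfib)).trans
    (Setoid.quotientKerEquivOfSurjective κ hsurj)

end OrbitQuotient

noncomputable def Equiv.sigmaSubtypeOfExistsUnique {α β : Type*} {p : α → β → Prop}
    (h : ∀ b, ∃! a, p a b) : (Σ a, {b // p a b}) ≃ β :=
  Equiv.ofBijective (fun x => x.2.1)
    ⟨fun x y (hxy : (x.2 : β) = y.2) =>
      Sigma.subtype_ext ((h _).unique x.2.2 (hxy ▸ y.2.2)) hxy,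
      fun b => ⟨⟨_, b, (h b).exists.choose_spec⟩, rfl⟩⟩

theorem Monotone.eq_of_map_univ_val_eq {α : Type*} [LinearOrder α] {r : ℕ} {f g : Fin r → α}
    (hf : Monotone f) (hg : Monotone g)
    (h : (univ.val.map f : Multiset α) = univ.val.map g) : f = g := by
  rw [Fin.univ_val_map, Fin.univ_val_map, Multiset.coe_eq_coe] at h
  exact List.ofFn_injective (h.eq_of_sortedLE hf.sortedLE_ofFn hg.sortedLE_ofFn)

theorem Equiv.Perm.exists_comp_eq_of_map_univ_val_eq {α γ : Type*} [Fintype α] {u v : α → γ}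
    (h : (univ.val.map u : Multiset γ) = univ.val.map v) : ∃ σ : Perm α, u ∘ σ = v := by
  have e : ∀ c, {x // v x = c} ≃ {x // u x = c} := fun c =>
    Fintype.equivOfCardEq (by
      have hc := congrArg (Multiset.count c) h
      simp only [Multiset.count_map, eq_comm (a := c)] at hc
      simp only [Fintype.card_subtype, Finset.card_def, Finset.filter_val, hc])
  exact ⟨(sigmaFiberEquiv v).symm.trans ((Equiv.sigmaCongrRight e).trans (sigmaFiberEquiv u)),
    funext fun x => (e (v x) ⟨x, rfl⟩).2⟩

namespace Multiset

theorem exists_monotone_map_univ_val_eq {α : Type*} [LinearOrder α] (m : Multiset α) {r : ℕ}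
    (hm : card m = r) : ∃ f : Fin r → α, Monotone f ∧ univ.val.map f = m := by
  set l := m.sort (· ≤ ·)
  have hl : l.length = r := by rw [length_sort, hm]
  have hofn : List.ofFn (fun i => l.get (Fin.cast hl.symm i)) = l :=
    List.ext_get (by simp [hl]) fun n _ _ => by simp
  refine ⟨fun i => l.get (Fin.cast hl.symm i), ?_, ?_⟩
  · rw [← List.sortedLE_ofFn_iff, hofn]
    exact (pairwise_sort _ _).sortedLE
  · rw [Fin.univ_val_map, hofn, sort_eq]

theorem existsUnique_monotone_map_univ_val_eq {α : Type*} [LinearOrder α] (m : Multiset α)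
    {r : ℕ} (hm : card m = r) :
    ∃! f : {f : Fin r → α // Monotone f}, univ.val.map f.val = m := by
  obtain ⟨f, hf, hfm⟩ := m.exists_monotone_map_univ_val_eq hm
  exact ⟨⟨f, hf⟩, hfm, fun g hg =>
    Subtype.ext (g.2.eq_of_map_univ_val_eq hf (hg.trans hfm.symm))⟩

theorem exists_le_map_eq_of_le_map {α β : Type*} (f : α → β) {m : Multiset β} :
    ∀ {u : Multiset α}, m ≤ u.map f → ∃ t ≤ u, t.map f = m := by
  induction m using Multiset.induction_on with
  | empty => exact fun {u} _ => ⟨0, zero_le u, rfl⟩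
  | cons b m ih =>
    intro u h
    obtain ⟨a, ha, rfl⟩ := mem_map.mp (mem_of_le h (mem_cons_self _ m))
    rw [← cons_erase ha, map_cons, cons_le_cons_iff] at h
    obtain ⟨t, htu, rfl⟩ := ih h
    exact ⟨a ::ₘ t, (cons_le_cons a htu).trans_eq (cons_erase ha), map_cons f a t⟩

theorem exists_decomposition_of_sum_eq_map {ι α β : Type*} (f : α → β) (s : Finset ι) :
    ∀ {M : ι → Multiset β} {u : Multiset α}, ∑ i ∈ s, M i = u.map f →
      ∃ T : ι → Multiset α, (∀ i ∈ s, (T i).map f = M i) ∧ ∑ i ∈ s, T i = u ∧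
        ∀ i ∉ s, T i = 0 := by
  induction s using Finset.induction_on with
  | empty =>
    intro M u h
    refine ⟨0, by simp, ?_, fun _ _ => rfl⟩
    simpa [eq_comm] using h
  | insert a s ha ih =>
    intro M u h
    rw [Finset.sum_insert ha] at h
    obtain ⟨t, htu, htM⟩ := exists_le_map_eq_of_le_map f (h ▸ le_add_right _ _)
    have hrest : ∑ i ∈ s, M i = (u - t).map f := by
      refine add_left_cancel (h.trans ?_)
      rw [← htM, ← map_add, add_tsub_cancel_of_le htu]
    obtain ⟨T, hTM, hTu, hT0⟩ := ih hrest
    refine ⟨Function.update T a t, ?_, ?_, ?_⟩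
    · intro i hi
      rcases Finset.mem_insert.mp hi with rfl | hi
      · rw [Function.update_self, htM]
      · rw [Function.update_of_ne (ne_of_mem_of_not_mem hi ha), hTM i hi]
    · rw [Finset.sum_insert ha, Function.update_self, ← add_tsub_cancel_of_le htu, ← hTu]
      congr 1
      exact Finset.sum_congr rfl fun i hi => Function.update_of_ne (ne_of_mem_of_not_mem hi ha) _ _
    · intro i hi
      rw [Function.update_of_ne (ne_of_mem_of_not_mem (Finset.mem_insert_self a s) hi).symm]
      exact hT0 i (fun h => hi (Finset.mem_insert_of_mem h))

theorem nodup_of_le_sum {ι α : Type*} {s : Finset ι} {m : ι → Multiset α}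
    (h : (∑ i ∈ s, m i).Nodup) {i : ι} (hi : i ∈ s) : (m i).Nodup :=
  nodup_of_le (Finset.single_le_sum (fun _ _ => zero_le _) hi) h

theorem disjoint_of_nodup_sum {ι α : Type*} {s : Finset ι} {m : ι → Multiset α}
    (h : (∑ i ∈ s, m i).Nodup) {i j : ι} (hi : i ∈ s) (hj : j ∈ s) (hij : i ≠ j) :
    Disjoint (m i) (m j) := by
  have hle : m i + m j ≤ ∑ l ∈ s, m l := by
    rw [← Finset.sum_pair hij]
    exact Finset.sum_le_sum_of_subset (Finset.insert_subset hi (Finset.singleton_subset_iff.mpr hj))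
  exact (nodup_add.mp (nodup_of_le hle h)).2.2

end Multiset

section SetPartitionTableau

variable {Y : YoungDiagram} {r : ℕ}

theorem isSPT_of_sum_val_eq_univ {T : ℕ × ℕ → Finset (Fin r)}
    (h0 : ∀ c ∉ Y.cells, T c = ∅) (hne : ∀ c ∈ Y.cells, 1 ≤ c.1 → T c ≠ ∅)
    (hsum : ∑ c ∈ Y.cells, (T c).val = univ.val) : IsSPT Y r T := by
  have hnodup : (∑ c ∈ Y.cells, (T c).val).Nodup := hsum ▸ univ.nodup
  refine ⟨h0, hne, fun c hc c' hc' hcc' => ?_, ?_⟩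
  · exact Finset.disjoint_val.mp (Multiset.disjoint_of_nodup_sum hnodup hc hc' hcc')
  · refine Finset.eq_univ_of_forall fun x => ?_
    obtain ⟨c, hc, hx⟩ := Multiset.mem_sum.mp (hsum ▸ Finset.mem_univ_val x)
    exact Finset.mem_biUnion.mpr ⟨c, hc, hx⟩

namespace IsSPT

variable {T : ℕ × ℕ → Finset (Fin r)}

theorem existsUnique_mem (hT : IsSPT Y r T) (x : Fin r) : ∃! c, c ∈ Y.cells ∧ x ∈ T c := by
  obtain ⟨-, -, hdisj, hcover⟩ := hT
  obtain ⟨c, hc, hx⟩ := Finset.mem_biUnion.mp (hcover ▸ Finset.mem_univ x)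
  refine ⟨c, ⟨hc, hx⟩, fun c' ⟨hc', hx'⟩ => ?_⟩
  by_contra hne
  exact Finset.disjoint_left.mp (hdisj c' hc' c hc hne) hx' hx

theorem sum_val (hT : IsSPT Y r T) : ∑ c ∈ Y.cells, (T c).val = univ.val := by
  obtain ⟨-, -, hdisj, hcover⟩ := hT
  have hdisj' : (Y.cells : Set (ℕ × ℕ)).PairwiseDisjoint T :=
    fun c hc c' hc' => hdisj c hc c' hc'
  calc ∑ c ∈ Y.cells, (T c).val = (Y.cells.disjiUnion T hdisj').val := by
        rw [Finset.disjiUnion_val]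
        rfl
    _ = univ.val := by rw [Finset.disjiUnion_eq_biUnion, hcover]

end IsSPT

namespace SPT

noncomputable def cell (T : SPT Y r) (x : Fin r) : ℕ × ℕ :=
  Finset.choose (fun c => x ∈ T.val c) Y.cells (T.prop.existsUnique_mem x)

theorem cell_eq_iff (T : SPT Y r) (x : Fin r) (c : ℕ × ℕ) :
    T.cell x = c ↔ x ∈ T.val c := by
  have hmem := Finset.choose_spec (fun c => x ∈ T.val c) Y.cells (T.prop.existsUnique_mem x)
  constructor
  · rintro rfl
    exact hmem.2
  · intro hx
    have hc : c ∈ Y.cells := by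
      by_contra hc
      simp [T.prop.1 c hc] at hx
    exact (T.prop.existsUnique_mem x).unique hmem ⟨hc, hx⟩

theorem smul_eq_of_cell_comp {T S : SPT Y r} {σ : Equiv.Perm (Fin r)}
    (h : S.cell ∘ σ = T.cell) : σ • T = S := by
  refine Subtype.ext (funext fun c => Finset.ext fun x => ?_)
  calc x ∈ (T.val c).image σ ↔ σ.symm x ∈ T.val c := by
        simp only [Finset.mem_image, ← Equiv.eq_symm_apply, exists_eq_right]
    _ ↔ T.cell (σ.symm x) = c := (T.cell_eq_iff _ _).symm
    _ ↔ S.cell x = c := by rw [← h, Function.comp_apply, Equiv.apply_symm_apply]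
    _ ↔ x ∈ S.val c := S.cell_eq_iff _ _

end SPT

end SetPartitionTableau

section Coloring

variable {Y : YoungDiagram} {r k : ℕ}

def colorMap (f : Fin r → Fin k) (T : SPT Y r) : ℕ × ℕ → Multiset (Fin k) :=
  fun c => (T.val c).val.map f

theorem sum_colorMap (f : Fin r → Fin k) (T : SPT Y r) :
    ∑ c ∈ Y.cells, colorMap f T c = univ.val.map f :=
  (map_sum (Multiset.mapAddMonoidHom f) _ _).symm.trans (congrArg (Multiset.map f) T.prop.sum_val)

theorem isMPT_colorMap (f : Fin r → Fin k) (T : SPT Y r) : IsMPT Y r k (colorMap f T) := by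
  refine ⟨fun c hc => ?_, fun c hc hrow h0 => ?_, ?_⟩
  · simp [colorMap, T.prop.1 c hc]
  · exact T.prop.2.1 c hc hrow (Finset.val_eq_zero.mp (Multiset.map_eq_zero.mp h0))
  · rw [sum_colorMap, Multiset.card_map, Finset.card_val, Finset.card_univ, Fintype.card_fin]

theorem colorMap_smul {f : Fin r → Fin k} {σ : Equiv.Perm (Fin r)} (hσ : σ ∈ colorStab f)
    (T : SPT Y r) : colorMap f (σ • T) = colorMap f T := by
  funext c
  change ((T.val c).image σ).val.map f = (T.val c).val.map f
  rw [Finset.image_val_of_injOn σ.injective.injOn, Multiset.map_map]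
  exact congrArg (Multiset.map · _) (funext hσ)

theorem map_cell_color_eq_sum_colorMap (f : Fin r → Fin k) (T : SPT Y r) :
    univ.val.map (fun x => (T.cell x, f x)) =
      ∑ c ∈ Y.cells, (colorMap f T c).map (Prod.mk c) := by
  rw [← congrArg (Multiset.map _) T.prop.sum_val]
  refine (map_sum (Multiset.mapAddMonoidHom _) _ _).trans (Finset.sum_congr rfl fun c _ => ?_)
  rw [colorMap, Multiset.map_map]
  exact Multiset.map_congr rfl fun x hx => by simp [(T.cell_eq_iff x c).mpr hx]

theorem mem_orbit_of_colorMap_eq {f : Fin r → Fin k} {T S : SPT Y r}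
    (h : colorMap f T = colorMap f S) : S ∈ orbit (colorStab f) T := by
  obtain ⟨σ, hσ⟩ := Equiv.Perm.exists_comp_eq_of_map_univ_val_eq
    (u := fun x => (S.cell x, f x)) (v := fun x => (T.cell x, f x))
    (by rw [map_cell_color_eq_sum_colorMap, map_cell_color_eq_sum_colorMap, h])
  have hσf : σ ∈ colorStab f := fun x => congrArg Prod.snd (congrFun hσ x)
  exact ⟨⟨σ, hσf⟩,
    SPT.smul_eq_of_cell_comp (funext fun x => congrArg Prod.fst (congrFun hσ x))⟩

theorem exists_colorMap_eq (f : Fin r → Fin k) {M : ℕ × ℕ → Multiset (Fin k)}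
    (hM : IsMPT Y r k M) (hsum : ∑ c ∈ Y.cells, M c = univ.val.map f) :
    ∃ T : SPT Y r, colorMap f T = M := by
  obtain ⟨Tm, hTM, hTsum, hT0⟩ := Multiset.exists_decomposition_of_sum_eq_map f Y.cells hsum
  have hnodup : (∑ c ∈ Y.cells, Tm c).Nodup := hTsum ▸ univ.nodup
  have hTm : ∀ c, (Tm c).Nodup := fun c => by
    by_cases hc : c ∈ Y.cells
    · exact Multiset.nodup_of_le_sum hnodup hc
    · simp [hT0 c hc]
  have hT : IsSPT Y r fun c => ⟨Tm c, hTm c⟩ := by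
    refine isSPT_of_sum_val_eq_univ (fun c hc => ?_) (fun c hc hrow h0 => ?_) hTsum
    · exact Finset.val_eq_zero.mp (hT0 c hc)
    · refine hM.2.1 c hc hrow ?_
      rw [← hTM c hc, show Tm c = 0 from congrArg Finset.val h0, Multiset.map_zero]
  refine ⟨⟨_, hT⟩, funext fun c => ?_⟩
  by_cases hc : c ∈ Y.cells
  · exact hTM c hc
  · simp [colorMap, hT0 c hc, hM.1 c hc]

noncomputable def colorOrbitEquiv (f : Fin r → Fin k) :
    Quotient (orbitRel (colorStab f) (SPT Y r)) ≃
      {M : {M // IsMPT Y r k M} // univ.val.map f = ∑ c ∈ Y.cells, M.val c} :=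
  orbitQuotientEquivOfFibers
    (κ := fun T => ⟨⟨colorMap f T, isMPT_colorMap f T⟩, (sum_colorMap f T).symm⟩)
    (fun M => (exists_colorMap_eq f M.1.2 M.2.symm).imp fun _ hT => Subtype.ext (Subtype.ext hT))
    (fun σ T => Subtype.ext (Subtype.ext (colorMap_smul σ.2 T)))
    (fun _ _ h => mem_orbit_of_colorMap_eq (congrArg (fun M => M.val.val) h))

end Coloring

theorem stmt19_general
    {G : Type*} [Group G] {X : Type*} [MulAction G X]
    (H : Subgroup G) {Z : Type*} (κ : X → Z)
    (hsurj : Function.Surjective κ)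
    (hinv : ∀ (h : H) (x : X), κ (h • x) = κ x)
    (hfib : ∀ x x', κ x = κ x' → x' ∈ MulAction.orbit H x)
    (Y : YoungDiagram) (r k : ℕ) :
    (∃ e : Quotient (MulAction.orbitRel H X) ≃ Z,
        ∀ x : X, e (Quotient.mk (MulAction.orbitRel H X) x) = κ x) ∧
    (∃ e : (Σ f : {f : Fin r → Fin k // Monotone f},
              Quotient (MulAction.orbitRel ↥(colorStab f.val) (SPT Y r))) ≃
            {M : ℕ × ℕ → Multiset (Fin k) // IsMPT Y r k M},
        ∀ (f : {f : Fin r → Fin k // Monotone f}) (T : SPT Y r),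
          (e ⟨f, Quotient.mk (MulAction.orbitRel ↥(colorStab f.val) (SPT Y r)) T⟩).val =
            fun c => (T.val c).val.map f.val) := by
  refine ⟨⟨orbitQuotientEquivOfFibers hsurj hinv hfib, fun x => rfl⟩, ?_⟩
  have hcontent : ∀ M : {M // IsMPT Y r k M},
      ∃! f : {f : Fin r → Fin k // Monotone f},
        univ.val.map f.val = ∑ c ∈ Y.cells, M.val c :=
    fun M => Multiset.existsUnique_monotone_map_univ_val_eq _ M.2.2.2
  refine ⟨(Equiv.sigmaCongrRight fun f : {f : Fin r → Fin k // Monotone f} =>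
    colorOrbitEquiv f.val).trans (Equiv.sigmaSubtypeOfExistsUnique hcontent), fun f T => rfl⟩

/-- (General part) Let `G` be a finite group acting on a finite set
`X`, `H ≤ G`, and `κ : X → Z` an `H`-invariant surjection such that `κ(x) = κ(x')`
implies `x, x'` lie in the same `H`-orbit.  Then `κ` induces a bijection `X/H ≅ Z`.
(Particular part)  For the action of the Young subgroups `S_a` on set partition tableaux
of shape `λ` by relabeling entries, the coloring maps `κ_a` induce a bijection
`⨄_{a ∈ W_{r,k}} SPT_{λ,r}/S_a ≅ MPT_{λ,r,k}` (weak compositions `a` being encoded by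
their monotone coloring maps `f : Fin r → Fin k`). -/
theorem stmt19
    {G : Type*} [Group G] [Finite G] {X : Type*} [MulAction G X] [Finite X]
    (H : Subgroup G) {Z : Type*} (κ : X → Z)
    (hsurj : Function.Surjective κ)
    (hinv : ∀ (h : H) (x : X), κ (h • x) = κ x)
    (hfib : ∀ x x', κ x = κ x' → x' ∈ MulAction.orbit H x)
    (Y : YoungDiagram) (r k : ℕ) :
    (∃ e : Quotient (MulAction.orbitRel H X) ≃ Z,
        ∀ x : X, e (Quotient.mk (MulAction.orbitRel H X) x) = κ x) ∧
    (∃ e : (Σ f : {f : Fin r → Fin k // Monotone f},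
              Quotient (MulAction.orbitRel ↥(colorStab f.val) (SPT Y r))) ≃
            {M : ℕ × ℕ → Multiset (Fin k) // IsMPT Y r k M},
        ∀ (f : {f : Fin r → Fin k // Monotone f}) (T : SPT Y r),
          (e ⟨f, Quotient.mk (MulAction.orbitRel ↥(colorStab f.val) (SPT Y r)) T⟩).val =
            fun c => (T.val c).val.map f.val) :=
  stmt19_general H κ hsurj hinv hfib Y r k
end
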